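/- arXiv:1702.08401 — 6 statements merged into one kernel-verified Lean document; each statement's English description precedes it below -/
import Mathlib

section
/- For every prime p ≥ 5, the sum of 1/(ijk) over all triples of positive integers (i, j, k) with i + j + k = p is congruent to -2·B_{p-3} modulo p. -/
open Finset

/-- `q` is a `p`-integral rational reducing to `a` mod `p`. -/
def PR (p : ℕ) (q : ℚ) (a : ZMod p) : Prop :=
  ∃ n d : ℤ, ((d : ZMod p) ≠ 0) ∧ q * (d : ℚ) = (n : ℚ) ∧ (n : ZMod p) = a * (d : ZMod p)

section PRlemmas

variable {p : ℕ} [hp : Fact p.Prime]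

lemma PR_int (n : ℤ) : PR p (n : ℚ) (n : ZMod p) :=
  ⟨n, 1, by simp, by simp, by simp⟩

lemma PR_nat (n : ℕ) : PR p (n : ℚ) (n : ZMod p) := by
  simpa using PR_int (p := p) (n : ℤ)

lemma PR_add {q r : ℚ} {a b : ZMod p} (hq : PR p q a) (hr : PR p r b) :
    PR p (q + r) (a + b) := by
  obtain ⟨n1, d1, hd1, e1, r1⟩ := hq
  obtain ⟨n2, d2, hd2, e2, r2⟩ := hr
  refine ⟨n1 * d2 + n2 * d1, d1 * d2, by push_cast; exact mul_ne_zero hd1 hd2, ?_, ?_⟩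
  · push_cast
    linear_combination (d2 : ℚ) * e1 + (d1 : ℚ) * e2
  · push_cast
    linear_combination (d2 : ZMod p) * r1 + (d1 : ZMod p) * r2

lemma PR_mul {q r : ℚ} {a b : ZMod p} (hq : PR p q a) (hr : PR p r b) :
    PR p (q * r) (a * b) := by
  obtain ⟨n1, d1, hd1, e1, r1⟩ := hq
  obtain ⟨n2, d2, hd2, e2, r2⟩ := hr
  refine ⟨n1 * n2, d1 * d2, by push_cast; exact mul_ne_zero hd1 hd2, ?_, ?_⟩
  · push_cast
    linear_combination (r * (d2 : ℚ)) * e1 + (n1 : ℚ) * e2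
  · push_cast
    linear_combination (b * (d2 : ZMod p)) * r1 + (n1 : ZMod p) * r2

lemma PR_neg {q : ℚ} {a : ZMod p} (hq : PR p q a) : PR p (-q) (-a) := by
  obtain ⟨n, d, hd, e, r⟩ := hq
  exact ⟨-n, d, hd, by push_cast; linear_combination -e, by push_cast; linear_combination -r⟩

lemma PR_sum {ι : Type*} (s : Finset ι) (f : ι → ℚ) (g : ι → ZMod p)
    (h : ∀ i ∈ s, PR p (f i) (g i)) :
    PR p (∑ i ∈ s, f i) (∑ i ∈ s, g i) := by
  classical
  induction s using Finset.cons_induction with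
  | empty => simpa using PR_int (p := p) 0
  | cons i s his ih =>
    rw [Finset.sum_cons, Finset.sum_cons]
    exact PR_add (h i (Finset.mem_cons_self i s)) (ih fun j hj => h j (Finset.mem_cons_of_mem hj))

lemma PR_pow {q : ℚ} {a : ZMod p} (hq : PR p q a) (k : ℕ) : PR p (q ^ k) (a ^ k) := by
  induction k with
  | zero => simpa using PR_int (p := p) 1
  | succ k ih => rw [pow_succ, pow_succ]; exact PR_mul ih hq

lemma PR_div_nat {q : ℚ} {a : ZMod p} (hq : PR p q a) (m : ℕ) (hm : (m : ZMod p) ≠ 0) :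
    PR p (q / (m : ℚ)) (a * (m : ZMod p)⁻¹) := by
  obtain ⟨n, d, hd, e, r⟩ := hq
  have hm0 : (m : ℚ) ≠ 0 := by
    intro h
    exact hm (by rw [show m = 0 by exact_mod_cast h]; simp)
  refine ⟨n, d * m, ?_, ?_, ?_⟩
  · push_cast; exact mul_ne_zero hd hm
  · push_cast
    field_simp
    linear_combination e
  · push_cast
    rw [r]
    field_simp

lemma PR_one_div_nat (i : ℕ) (hi : (i : ZMod p) ≠ 0) :
    PR p (1 / (i : ℚ)) ((i : ZMod p))⁻¹ := by
  have hi0 : (i : ℚ) ≠ 0 := by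
    intro h
    exact hi (by rw [show i = 0 by exact_mod_cast h]; simp)
  exact ⟨1, i, by exact_mod_cast hi, by push_cast; field_simp, by push_cast; field_simp⟩

lemma PR_unique {q : ℚ} {a b : ZMod p} (ha : PR p q a) (hb : PR p q b) : a = b := by
  obtain ⟨n1, d1, hd1, e1, r1⟩ := ha
  obtain ⟨n2, d2, hd2, e2, r2⟩ := hb
  have key : (n1 * d2 : ℚ) = (n2 * d1 : ℚ) := by
    push_cast
    linear_combination (d1 : ℚ) * e2 - (d2 : ℚ) * e1
  have keyZ : (n1 * d2 : ℤ) = n2 * d1 := by exact_mod_cast key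
  have : ((n1 * d2 : ℤ) : ZMod p) = ((n2 * d1 : ℤ) : ZMod p) := by rw [keyZ]
  push_cast at this
  rw [r1, r2] at this
  have h12 : (d1 : ZMod p) * (d2 : ZMod p) ≠ 0 := mul_ne_zero hd1 hd2
  have h' : (a - b) * ((d1 : ZMod p) * (d2 : ZMod p)) = 0 := by linear_combination this
  rcases mul_eq_zero.mp h' with h | h
  · exact sub_eq_zero.mp h
  · exact absurd h h12

lemma PR_norm {q : ℚ} (h : PR p q 0) : ‖(q : ℚ_[p])‖ ≤ (p : ℝ) ^ (-1 : ℤ) := by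
  obtain ⟨n, d, hd, e, r⟩ := h
  rw [zero_mul] at r
  have hn : (p : ℤ) ∣ n := by
    rwa [ZMod.intCast_zmod_eq_zero_iff_dvd] at r
  have hnorm_n : ‖((n : ℚ_[p]))‖ ≤ (p : ℝ) ^ (-1 : ℤ) := by
    have := (Padic.norm_int_le_pow_iff_dvd (p := p) n 1).mpr (by simpa using hn)
    simpa using this
  have hnorm_d : ‖((d : ℚ_[p]))‖ = 1 := by
    apply le_antisymm (Padic.norm_int_le_one d)
    by_contra hlt
    push_neg at hlt
    have : (p : ℤ) ∣ d := (Padic.norm_intCast_lt_one_iff (k := d)).mp hlt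
    have : ((d : ℤ) : ZMod p) = 0 := (ZMod.intCast_zmod_eq_zero_iff_dvd d p).mpr this
    exact hd this
  have e' : (q : ℚ_[p]) * (d : ℚ_[p]) = (n : ℚ_[p]) := by
    have h2 := congrArg (fun x : ℚ => (x : ℚ_[p])) e
    push_cast at h2
    exact h2
  calc ‖(q : ℚ_[p])‖ = ‖(q : ℚ_[p])‖ * ‖((d : ℚ_[p]))‖ := by rw [hnorm_d, mul_one]
    _ = ‖(q : ℚ_[p]) * (d : ℚ_[p])‖ := (norm_mul _ _).symm
    _ = ‖((n : ℚ_[p]))‖ := by rw [e']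
    _ ≤ (p : ℝ) ^ (-1 : ℤ) := hnorm_n

end PRlemmas
section Bern

variable {p : ℕ} [hp : Fact p.Prime]

lemma natCast_ne_zero_of_lt {i : ℕ} (h0 : 0 < i) (hip : i < p) : (i : ZMod p) ≠ 0 := by
  intro h
  rw [ZMod.natCast_eq_zero_iff] at h
  exact absurd (Nat.le_of_dvd h0 h) (by omega)

/-- a canonical mod-p reduction of bernoulli numbers -/
noncomputable def bred (p : ℕ) (k : ℕ) : ZMod p :=
  letI := Classical.propDecidable (∃ a : ZMod p, PR p (bernoulli k) a)
  if h : ∃ a : ZMod p, PR p (bernoulli k) a then h.choose else 0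

lemma bred_spec {p : ℕ} {k : ℕ} (h : ∃ a : ZMod p, PR p (bernoulli k) a) :
    PR p (bernoulli k) (bred p k) := by
  rw [bred]
  rw [dif_pos h]
  exact h.choose_spec

lemma PR_bernoulli : ∀ n : ℕ, n < p - 1 → PR p (bernoulli n) (bred p n) := by
  intro n
  induction n using Nat.strong_induction_on with
  | _ n ih =>
    intro hn
    have hex : ∃ a : ZMod p, PR p (bernoulli n) a := by
      rcases Nat.eq_zero_or_pos n with rfl | hn0
      · exact ⟨1, by rw [bernoulli_zero]; simpa using PR_int (p := p) 1⟩
      · -- use the recurrence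
        have hrec := sum_bernoulli (n + 1)
        rw [if_neg (by omega)] at hrec
        rw [Finset.sum_range_succ] at hrec
        have hch : ((n + 1).choose n : ℚ) = (n + 1 : ℕ) := by
          rw [Nat.choose_succ_self_right]
        have hb : bernoulli n =
            (- ∑ k ∈ Finset.range n, ((n + 1).choose k : ℚ) * bernoulli k) / ((n + 1 : ℕ) : ℚ) := by
          rw [eq_div_iff (by positivity)]
          rw [hch] at hrec
          linear_combination hrec
        have hne : ((n + 1 : ℕ) : ZMod p) ≠ 0 := natCast_ne_zero_of_lt (by omega) (by omega)
        refine ⟨(- ∑ k ∈ Finset.range n, ((n + 1).choose k : ZMod p) * bred p k) *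
          ((n + 1 : ℕ) : ZMod p)⁻¹, ?_⟩
        rw [hb]
        refine PR_div_nat ?_ _ hne
        refine PR_neg (PR_sum _ _ _ fun k hk => ?_)
        have hk' := Finset.mem_range.mp hk
        exact PR_mul (PR_nat _) (ih k hk' (by omega))
    exact bred_spec hex

/-- Faulhaber mod p : for `p ≥ 5`, sums of `(p-2)`-th powers. -/
lemma faulhaber_mod (hp5 : 5 ≤ p) (s : ℕ) :
    (∑ k ∈ Finset.range s, (k : ZMod p) ^ (p - 2)) =
      ∑ r ∈ Finset.range (p - 1),
        bred p r * ((p - 1).choose r : ZMod p) * (s : ZMod p) ^ (p - 1 - r) *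
          ((p - 1 : ℕ) : ZMod p)⁻¹ := by
  have h21 : p - 2 + 1 = p - 1 := by omega
  have hQ : (∑ k ∈ Finset.range s, (k : ℚ) ^ (p - 2)) =
      ∑ r ∈ Finset.range (p - 1),
        (bernoulli r * ((p - 1).choose r : ℚ) * (s : ℚ) ^ (p - 1 - r)) / ((p - 1 : ℕ) : ℚ) := by
    have hF := sum_range_pow s (p - 2)
    rw [h21] at hF
    rw [hF]
    refine Finset.sum_congr rfl fun r _ => ?_
    congr 1
    rw [Nat.cast_sub (by omega), Nat.cast_sub (by omega)]
    push_cast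
    ring
  have hL : PR p (∑ k ∈ Finset.range s, (k : ℚ) ^ (p - 2))
      (∑ k ∈ Finset.range s, (k : ZMod p) ^ (p - 2)) :=
    PR_sum _ _ _ fun k _ => PR_pow (PR_nat k) _
  have hR : PR p (∑ k ∈ Finset.range s, (k : ℚ) ^ (p - 2))
      (∑ r ∈ Finset.range (p - 1),
        bred p r * ((p - 1).choose r : ZMod p) * (s : ZMod p) ^ (p - 1 - r) *
          ((p - 1 : ℕ) : ZMod p)⁻¹) := by
    rw [hQ]
    refine PR_sum _ _ _ fun r hr => ?_
    have hmem := Finset.mem_range.mp hr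
    refine PR_div_nat ?_ _ (natCast_ne_zero_of_lt (by omega) (by omega))
    exact PR_mul (PR_mul (PR_bernoulli r (by omega)) (PR_nat _)) (PR_pow (PR_nat s) _)
  exact PR_unique hL hR

end Bern
section Main

variable {p : ℕ} [hp : Fact p.Prime]

lemma pow_sub_two_eq_inv {a : ZMod p} (h : a ≠ 0) : a ^ (p - 2) = a⁻¹ := by
  have h2 : p - 2 + 1 = p - 1 := by have := hp.out.two_le; omega
  have h1 : a ^ (p - 2) * a = 1 := by
    rw [← pow_succ, h2, ZMod.pow_card_sub_one_eq_one h]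
  exact (inv_eq_of_mul_eq_one_left h1).symm

lemma sum_Ioo_pow_units (m : ℕ) :
    (∑ s ∈ Finset.Ioo 0 p, (s : ZMod p) ^ m) = ∑ x : (ZMod p)ˣ, (x : ZMod p) ^ m := by
  haveI : NeZero p := ⟨hp.out.ne_zero⟩
  refine Finset.sum_bij'
    (i := fun s hs => ZMod.unitOfCoprime s (Nat.Coprime.symm
      ((Nat.Prime.coprime_iff_not_dvd hp.out).mpr (fun hdvd => by
        have h1 := Finset.mem_Ioo.mp hs
        exact absurd (Nat.le_of_dvd h1.1 hdvd) (by omega)))))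
    (j := fun u _ => (u : ZMod p).val) ?_ ?_ ?_ ?_ ?_
  · intro a ha; exact Finset.mem_univ _
  · intro u hu
    rw [Finset.mem_Ioo]
    constructor
    · rcases Nat.eq_zero_or_pos ((u : ZMod p).val) with h | h
      · exfalso
        exact Units.ne_zero u ((ZMod.val_eq_zero _).mp h)
      · exact h
    · exact ZMod.val_lt _
  · intro s hs
    have h1 := Finset.mem_Ioo.mp hs
    rw [ZMod.coe_unitOfCoprime]
    exact ZMod.val_cast_of_lt h1.2
  · intro u hu
    apply Units.ext
    rw [ZMod.coe_unitOfCoprime]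
    exact ZMod.natCast_rightInverse _
  · intro s hs
    rw [ZMod.coe_unitOfCoprime]

lemma sum_Ioo_pow_val (m : ℕ) :
    (∑ s ∈ Finset.Ioo 0 p, (s : ZMod p) ^ m) = if (p - 1) ∣ m then -1 else 0 := by
  rw [sum_Ioo_pow_units, FiniteField.sum_pow_units, ZMod.card]

lemma dvd_iff_req (hp5 : 5 ≤ p) {r : ℕ} (hr : r < p - 1) :
    (p - 1) ∣ (3 * p - 5 - r) ↔ r = p - 3 := by
  constructor
  · rintro ⟨c, hc⟩
    rcases Nat.lt_or_ge c 2 with h2 | h2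
    · have hle : (p - 1) * c ≤ (p - 1) * 1 := Nat.mul_le_mul_left _ (by omega)
      have h3 : 3 * p - 5 - r ≤ (p - 1) * 1 := by rw [hc]; exact hle
      omega
    · rcases Nat.lt_or_ge c 3 with h3 | h3
      · have : c = 2 := by omega
        subst this
        omega
      · have hle : (p - 1) * 3 ≤ (p - 1) * c := Nat.mul_le_mul_left _ h3
        have h4 : (p - 1) * 3 ≤ 3 * p - 5 - r := by rw [hc]; exact hle
        omega
  · rintro rfl
    exact ⟨2, by omega⟩

lemma cast_p_sub (k : ℕ) (hk : k ≤ p) : ((p - k : ℕ) : ZMod p) = -(k : ZMod p) := by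
  rw [Nat.cast_sub hk]
  simp

lemma choose_cast_eq_one (hp5 : 5 ≤ p) : (((p - 1).choose (p - 3) : ℕ) : ZMod p) = 1 := by
  have hsymm : (p - 1).choose (p - 3) = (p - 1).choose 2 := by
    have := Nat.choose_symm (show p - 3 ≤ p - 1 by omega) (n := p - 1)
    rw [show p - 1 - (p - 3) = 2 by omega] at this
    exact this.symm
  have heven : 2 ∣ (p - 1) * (p - 1 - 1) := by
    have := Nat.even_mul_succ_self (p - 2)
    rw [show p - 2 + 1 = p - 1 by omega] at this
    rw [show p - 1 - 1 = p - 2 by omega]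
    rcases this with ⟨k, hk⟩
    exact ⟨k, by rw [Nat.mul_comm]; omega⟩
  have h2 : 2 * ((p - 1).choose 2) = (p - 1) * (p - 1 - 1) := by
    rw [Nat.choose_two_right]
    exact Nat.mul_div_cancel' heven
  have hcast : (2 : ZMod p) * (((p - 1).choose 2 : ℕ) : ZMod p) = 2 := by
    have := congrArg (fun n : ℕ => (n : ZMod p)) h2
    push_cast at this
    rw [show ((p - 1 : ℕ) : ZMod p) = -1 by rw [cast_p_sub 1 (by omega)]; simp,
      show ((p - 1 - 1 : ℕ) : ZMod p) = -2 by
        rw [show p - 1 - 1 = p - 2 by omega, cast_p_sub 2 (by omega)]; norm_num] at this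
    rw [this]
    ring
  have h2ne : (2 : ZMod p) ≠ 0 := by
    have := natCast_ne_zero_of_lt (p := p) (i := 2) (by omega) (by omega)
    simpa using this
  rw [hsymm]
  have := mul_left_cancel₀ h2ne (by rw [hcast]; ring : (2 : ZMod p) * (((p - 1).choose 2 : ℕ) : ZMod p) = 2 * 1)
  exact this

end Main
section SZsec

variable {p : ℕ} [hp : Fact p.Prime]

lemma SZ (hp5 : 5 ≤ p) :
    (∑ l ∈ (Fintype.piFinset fun _ : Fin 3 => Finset.Ioo 0 p).filter
        (fun l : Fin 3 → ℕ => l 0 + l 1 + l 2 = p),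
      ((l 0 : ZMod p) * (l 1 : ZMod p) * (l 2 : ZMod p))⁻¹)
      = -(2 * bred p (p - 3)) := by
  classical
  have hA : (∑ l ∈ (Fintype.piFinset fun _ : Fin 3 => Finset.Ioo 0 p).filter
        (fun l : Fin 3 → ℕ => l 0 + l 1 + l 2 = p),
      ((l 0 : ZMod p) * (l 1 : ZMod p) * (l 2 : ZMod p))⁻¹)
      = ∑ x ∈ (Finset.Ioo 0 p ×ˢ Finset.Ioo 0 p).filter (fun x : ℕ × ℕ => x.1 + x.2 < p),
          ((x.1 : ZMod p) * (x.2 : ZMod p) * ((p - x.1 - x.2 : ℕ) : ZMod p))⁻¹ := by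
    refine Finset.sum_bij' (i := fun l _ => (l 0, l 1))
      (j := fun x _ => ![x.1, x.2, p - x.1 - x.2]) ?_ ?_ ?_ ?_ ?_
    · intro l hl
      simp only [Finset.mem_filter, Fintype.mem_piFinset, Finset.mem_Ioo] at hl
      obtain ⟨hmem, hsum⟩ := hl
      have h0 := hmem 0; have h1 := hmem 1; have h2 := hmem 2
      simp only [Finset.mem_filter, Finset.mem_product, Finset.mem_Ioo]
      omega
    · intro x hx
      simp only [Finset.mem_filter, Finset.mem_product, Finset.mem_Ioo] at hx
      simp only [Finset.mem_filter, Fintype.mem_piFinset, Finset.mem_Ioo]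
      constructor
      · intro t
        fin_cases t <;> simp <;> omega
      · simp
        omega
    · intro l hl
      simp only [Finset.mem_filter, Fintype.mem_piFinset, Finset.mem_Ioo] at hl
      obtain ⟨hmem, hsum⟩ := hl
      have h2 := hmem 2
      funext t
      fin_cases t <;> simp <;> omega
    · intro x hx
      simp
    · intro l hl
      simp only [Finset.mem_filter, Fintype.mem_piFinset, Finset.mem_Ioo] at hl
      obtain ⟨hmem, hsum⟩ := hl
      have h2 := hmem 2
      have heq : p - l 0 - l 1 = l 2 := by omega
      dsimp only
      rw [heq]
  have hA2 : ∀ x ∈ (Finset.Ioo 0 p ×ˢ Finset.Ioo 0 p).filter (fun x : ℕ × ℕ => x.1 + x.2 < p),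
      ((x.1 : ZMod p) * (x.2 : ZMod p) * ((p - x.1 - x.2 : ℕ) : ZMod p))⁻¹
      = -(((x.1 : ZMod p) * (x.2 : ZMod p) * ((x.1 : ZMod p) + (x.2 : ZMod p)))⁻¹) := by
    intro x hx
    simp only [Finset.mem_filter, Finset.mem_product, Finset.mem_Ioo] at hx
    have hc : ((p - x.1 - x.2 : ℕ) : ZMod p) = -((x.1 : ZMod p) + (x.2 : ZMod p)) := by
      have h1 : p - x.1 - x.2 = p - (x.1 + x.2) := by omega
      rw [h1, cast_p_sub _ (by omega)]
      push_cast
      ring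
    rw [hc, show (x.1 : ZMod p) * (x.2 : ZMod p) * -((x.1 : ZMod p) + (x.2 : ZMod p))
        = -((x.1 : ZMod p) * (x.2 : ZMod p) * ((x.1 : ZMod p) + (x.2 : ZMod p))) by ring, inv_neg]
  have hB : (∑ x ∈ (Finset.Ioo 0 p ×ˢ Finset.Ioo 0 p).filter (fun x : ℕ × ℕ => x.1 + x.2 < p),
      ((x.1 : ZMod p) * (x.2 : ZMod p) * ((x.1 : ZMod p) + (x.2 : ZMod p)))⁻¹)
      = ∑ y ∈ (Finset.Ioo 0 p ×ˢ Finset.Ioo 0 p).filter (fun y : ℕ × ℕ => y.2 < y.1),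
          ((y.2 : ZMod p) * ((y.1 - y.2 : ℕ) : ZMod p) * (y.1 : ZMod p))⁻¹ := by
    refine Finset.sum_bij' (i := fun x _ => (x.1 + x.2, x.1)) (j := fun y _ => (y.2, y.1 - y.2))
      ?_ ?_ ?_ ?_ ?_
    · intro x hx
      simp only [Finset.mem_filter, Finset.mem_product, Finset.mem_Ioo] at hx ⊢
      omega
    · intro y hy
      simp only [Finset.mem_filter, Finset.mem_product, Finset.mem_Ioo] at hy ⊢
      omega
    · intro x hx
      simp only [Finset.mem_filter, Finset.mem_product, Finset.mem_Ioo] at hx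
      dsimp only
      rw [Prod.ext_iff]
      constructor <;> dsimp <;> omega
    · intro y hy
      simp only [Finset.mem_filter, Finset.mem_product, Finset.mem_Ioo] at hy
      dsimp only
      rw [Prod.ext_iff]
      constructor <;> dsimp <;> omega
    · intro x hx
      simp only [Finset.mem_filter, Finset.mem_product, Finset.mem_Ioo] at hx
      dsimp only
      rw [show x.1 + x.2 - x.1 = x.2 by omega]
      congr 1
      push_cast
      ring
  have hC : (∑ y ∈ (Finset.Ioo 0 p ×ˢ Finset.Ioo 0 p).filter (fun y : ℕ × ℕ => y.2 < y.1),
      ((y.2 : ZMod p) * ((y.1 - y.2 : ℕ) : ZMod p) * (y.1 : ZMod p))⁻¹)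
      = ∑ s ∈ Finset.Ioo 0 p, ∑ i ∈ Finset.Ioo 0 s,
          ((i : ZMod p) * ((s - i : ℕ) : ZMod p) * (s : ZMod p))⁻¹ := by
    rw [Finset.sum_filter, Finset.sum_product]
    refine Finset.sum_congr rfl fun s hs => ?_
    rw [Finset.mem_Ioo] at hs
    rw [← Finset.sum_filter]
    apply Finset.sum_congr ?_ fun i _ => rfl
    ext i
    simp only [Finset.mem_filter, Finset.mem_Ioo]
    omega
  have hD : ∀ s ∈ Finset.Ioo 0 p,
      (∑ i ∈ Finset.Ioo 0 s, ((i : ZMod p) * ((s - i : ℕ) : ZMod p) * (s : ZMod p))⁻¹)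
      = (s : ZMod p)⁻¹ * (s : ZMod p)⁻¹ *
          (2 * ∑ k ∈ Finset.range s, (k : ZMod p) ^ (p - 2)) := by
    intro s hs
    rw [Finset.mem_Ioo] at hs
    have hsne : (s : ZMod p) ≠ 0 := natCast_ne_zero_of_lt hs.1 hs.2
    have hterm : ∀ i ∈ Finset.Ioo 0 s,
        ((i : ZMod p) * ((s - i : ℕ) : ZMod p) * (s : ZMod p))⁻¹
        = (s : ZMod p)⁻¹ * (s : ZMod p)⁻¹ *
            ((i : ZMod p)⁻¹ + (((s - i : ℕ) : ZMod p))⁻¹) := by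
      intro i hi
      rw [Finset.mem_Ioo] at hi
      have hine : (i : ZMod p) ≠ 0 := natCast_ne_zero_of_lt hi.1 (by omega)
      have hsine : ((s - i : ℕ) : ZMod p) ≠ 0 := natCast_ne_zero_of_lt (by omega) (by omega)
      have hadd : (i : ZMod p) + ((s - i : ℕ) : ZMod p) = (s : ZMod p) := by
        rw [Nat.cast_sub (by omega)]
        ring
      have hic : (i : ZMod p)⁻¹ + (((s - i : ℕ) : ZMod p))⁻¹
          = (s : ZMod p) * ((i : ZMod p)⁻¹ * (((s - i : ℕ) : ZMod p))⁻¹) := by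
        rw [← hadd]
        field_simp
        ring
      rw [hic, mul_inv, mul_inv]
      field_simp
    rw [Finset.sum_congr rfl hterm, ← Finset.mul_sum]
    congr 1
    rw [Finset.sum_add_distrib]
    have hrefl : (∑ i ∈ Finset.Ioo 0 s, (((s - i : ℕ) : ZMod p))⁻¹)
        = ∑ i ∈ Finset.Ioo 0 s, ((i : ZMod p))⁻¹ := by
      refine Finset.sum_bij' (i := fun a _ => s - a) (j := fun a _ => s - a) ?_ ?_ ?_ ?_ ?_
      · intro a ha; simp only [Finset.mem_Ioo] at ha ⊢; omega
      · intro a ha; simp only [Finset.mem_Ioo] at ha ⊢; omega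
      · intro a ha; simp only [Finset.mem_Ioo] at ha; omega
      · intro a ha; simp only [Finset.mem_Ioo] at ha; omega
      · intro a ha; rfl
    have hinv : (∑ i ∈ Finset.Ioo 0 s, ((i : ZMod p))⁻¹)
        = ∑ k ∈ Finset.range s, (k : ZMod p) ^ (p - 2) := by
      rw [Finset.range_eq_Ico, ← Finset.Ioo_insert_left hs.1,
        Finset.sum_insert Finset.left_notMem_Ioo]
      rw [Nat.cast_zero, zero_pow (show p - 2 ≠ 0 by omega), zero_add]
      refine Finset.sum_congr rfl fun i hi => ?_
      rw [Finset.mem_Ioo] at hi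
      exact (pow_sub_two_eq_inv (natCast_ne_zero_of_lt hi.1 (by omega))).symm
    rw [hrefl, hinv]
    ring
  rw [hA, Finset.sum_congr rfl hA2, Finset.sum_neg_distrib, hB, hC, Finset.sum_congr rfl hD,
    neg_inj]
  have hE : ∀ s ∈ Finset.Ioo 0 p,
      (s : ZMod p)⁻¹ * (s : ZMod p)⁻¹ * (2 * ∑ k ∈ Finset.range s, (k : ZMod p) ^ (p - 2))
      = ∑ r ∈ Finset.range (p - 1),
          2 * (bred p r * ((p - 1).choose r : ZMod p) * (((p - 1 : ℕ)) : ZMod p)⁻¹) *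
            ((s : ZMod p) ^ (3 * p - 5 - r)) := by
    intro s hs
    rw [Finset.mem_Ioo] at hs
    have hsne : (s : ZMod p) ≠ 0 := natCast_ne_zero_of_lt hs.1 hs.2
    rw [faulhaber_mod hp5, Finset.mul_sum, Finset.mul_sum]
    refine Finset.sum_congr rfl fun r hr => ?_
    rw [Finset.mem_range] at hr
    rw [show (s : ZMod p)⁻¹ = (s : ZMod p) ^ (p - 2) from (pow_sub_two_eq_inv hsne).symm]
    rw [show 3 * p - 5 - r = (p - 2) + ((p - 2) + (p - 1 - r)) by omega, pow_add, pow_add]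
    ring
  rw [Finset.sum_congr rfl hE, Finset.sum_comm]
  have hF : ∀ r ∈ Finset.range (p - 1),
      (∑ s ∈ Finset.Ioo 0 p,
        2 * (bred p r * ((p - 1).choose r : ZMod p) * (((p - 1 : ℕ)) : ZMod p)⁻¹) *
          ((s : ZMod p) ^ (3 * p - 5 - r)))
      = if r = p - 3 then
          -(2 * (bred p r * ((p - 1).choose r : ZMod p) * (((p - 1 : ℕ)) : ZMod p)⁻¹)) else 0 := by
    intro r hr
    rw [Finset.mem_range] at hr
    rw [← Finset.mul_sum, sum_Ioo_pow_val]
    by_cases hr3 : r = p - 3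
    · rw [if_pos ((dvd_iff_req hp5 hr).mpr hr3), if_pos hr3]
      ring
    · rw [if_neg (fun hd => hr3 ((dvd_iff_req hp5 hr).mp hd)), if_neg hr3, mul_zero]
  rw [Finset.sum_congr rfl hF, Finset.sum_ite_eq' (Finset.range (p - 1)) (p - 3)]
  rw [if_pos (Finset.mem_range.mpr (by omega))]
  rw [choose_cast_eq_one hp5]
  rw [show ((p - 1 : ℕ) : ZMod p) = -1 from by rw [cast_p_sub 1 (by omega)]; simp]
  norm_num

end SZsec
theorem stmt_3 (p : ℕ) [hp : Fact p.Prime] (hp5 : 5 ≤ p) :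
    ‖((((∑ l ∈ (Fintype.piFinset fun _ : Fin 3 => Finset.Ioo 0 p).filter
            (fun l : Fin 3 → ℕ => l 0 + l 1 + l 2 = p),
          (1 : ℚ) / (l 0 * l 1 * l 2)) + 2 * bernoulli (p - 3)) : ℚ) : ℚ_[p])‖
      ≤ (p : ℝ) ^ (-1 : ℤ) := by
  have hPR : PR p
      ((∑ l ∈ (Fintype.piFinset fun _ : Fin 3 => Finset.Ioo 0 p).filter
            (fun l : Fin 3 → ℕ => l 0 + l 1 + l 2 = p),
          (1 : ℚ) / (l 0 * l 1 * l 2)) + 2 * bernoulli (p - 3))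
      ((∑ l ∈ (Fintype.piFinset fun _ : Fin 3 => Finset.Ioo 0 p).filter
            (fun l : Fin 3 → ℕ => l 0 + l 1 + l 2 = p),
          ((l 0 : ZMod p) * (l 1 : ZMod p) * (l 2 : ZMod p))⁻¹) + 2 * bred p (p - 3)) := by
    refine PR_add (PR_sum _ _ _ fun l hl => ?_) (PR_mul ?_ (PR_bernoulli (p - 3) (by omega)))
    · simp only [Finset.mem_filter, Fintype.mem_piFinset, Finset.mem_Ioo] at hl
      obtain ⟨hmem, hsum⟩ := hl
      have h0 := hmem 0; have h1 := hmem 1; have h2 := hmem 2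
      have hm : ((l 0 * l 1 * l 2 : ℕ) : ZMod p) ≠ 0 := by
        push_cast
        exact mul_ne_zero (mul_ne_zero (natCast_ne_zero_of_lt h0.1 h0.2)
          (natCast_ne_zero_of_lt h1.1 h1.2)) (natCast_ne_zero_of_lt h2.1 h2.2)
      have := PR_one_div_nat (l 0 * l 1 * l 2) hm
      push_cast at this
      exact this
    · simpa using PR_int (p := p) 2
  rw [SZ hp5] at hPR
  rw [show -(2 * bred p (p - 3)) + 2 * bred p (p - 3) = 0 by ring] at hPR
  exact PR_norm hPR
end

section
/- Let p be a prime, let m, n, r be positive integers, and define R_n^{(m)}(p^r) = Σ 1/(l_1···l_n) where the sum is over n-tuples of positive integers (l_1, ..., l_n) with l_1 + ··· + l_n = m·p^r and p ∤ l_j for all j, and define S_n^{(m)}(p^r) similarly with the additional constraint l_j < p^r for all j. Then S_n^{(m)}(p^r) ≡ Σ_{k=0}^{m-1} (-1)^k · C(n, k) · R_n^{(m-k)}(p^r) (mod p^r), where the congruence is between p-integral rational numbers. -/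
open Finset

/-- `R n m p r` is the sum of `1/(l₁⋯lₙ)` over `n`-tuples of positive integers
summing to `m·p^r` with every component prime to `p`. -/
noncomputable def Rsum (n m p r : ℕ) : ℚ :=
  ∑ l ∈ (Fintype.piFinset fun _ : Fin n => Finset.Ioo 0 (m * p ^ r + 1)).filter
      (fun l : Fin n → ℕ => (∑ i, l i) = m * p ^ r ∧ ∀ i, ¬ p ∣ l i),
    (∏ i, (l i : ℚ))⁻¹

/-- `Ssum n m p r` is as `Rsum` but with the extra constraint `lⱼ < p^r`. -/
noncomputable def Ssum (n m p r : ℕ) : ℚ :=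
  ∑ l ∈ (Fintype.piFinset fun _ : Fin n => Finset.Ioo 0 (p ^ r)).filter
      (fun l : Fin n → ℕ => (∑ i, l i) = m * p ^ r ∧ ∀ i, ¬ p ∣ l i),
    (∏ i, (l i : ℚ))⁻¹

lemma dvd_prod_sub {ι : Type*} (d : ℤ) (s : Finset ι) (f g : ι → ℤ)
    (h : ∀ i, d ∣ f i - g i) : d ∣ ∏ i ∈ s, f i - ∏ i ∈ s, g i := by
  induction s using Finset.cons_induction with
  | empty => simp
  | cons a s ha ih =>
    rw [Finset.prod_cons, Finset.prod_cons]
    have : f a * ∏ i ∈ s, f i - g a * ∏ i ∈ s, g i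
        = f a * (∏ i ∈ s, f i - ∏ i ∈ s, g i) + (f a - g a) * ∏ i ∈ s, g i := by ring
    rw [this]
    exact dvd_add (Dvd.dvd.mul_left ih _) (Dvd.dvd.mul_right (h a) _)

lemma norm_nat_eq_one (p : ℕ) [hp : Fact p.Prime] (k : ℕ) (hk : ¬ p ∣ k) :
    ‖(k : ℚ_[p])‖ = 1 := by
  have h1 : ‖((k : ℤ) : ℚ_[p])‖ ≤ 1 := Padic.norm_int_le_one _
  have h2 : ¬ ‖((k : ℤ) : ℚ_[p])‖ < 1 := by
    rw [Padic.norm_intCast_lt_one_iff]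
    exact_mod_cast hk
  push_cast at h1 h2
  linarith [lt_or_eq_of_le h1]

lemma key_norm (p : ℕ) [hp : Fact p.Prime] {n r : ℕ} (l l' : Fin n → ℕ)
    (hl : ∀ i, ¬ p ∣ l i) (hl' : ∀ i, ¬ p ∣ l' i)
    (hcong : ∀ i, ((p : ℤ) ^ r) ∣ (l i : ℤ) - (l' i : ℤ)) :
    ‖(∏ i, (l i : ℚ_[p]))⁻¹ - (∏ i, (l' i : ℚ_[p]))⁻¹‖ ≤ (p : ℝ) ^ (-(r : ℤ)) := by
  set a : ℚ_[p] := ∏ i, (l i : ℚ_[p]) with ha_def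
  set b : ℚ_[p] := ∏ i, (l' i : ℚ_[p]) with hb_def
  have ha : ‖a‖ = 1 := by
    rw [ha_def, norm_prod]
    exact Finset.prod_eq_one fun i _ => norm_nat_eq_one p _ (hl i)
  have hb : ‖b‖ = 1 := by
    rw [hb_def, norm_prod]
    exact Finset.prod_eq_one fun i _ => norm_nat_eq_one p _ (hl' i)
  have ha0 : a ≠ 0 := by intro h; rw [h] at ha; simp at ha
  have hb0 : b ≠ 0 := by intro h; rw [h] at hb; simp at hb
  have key : a⁻¹ - b⁻¹ = (b - a) * (a * b)⁻¹ := by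
    field_simp
  rw [key, norm_mul, norm_inv, norm_mul, ha, hb]
  have : b - a = (((∏ i, (l' i : ℤ)) - ∏ i, (l i : ℤ) : ℤ) : ℚ_[p]) := by
    push_cast [ha_def, hb_def]; ring
  rw [this]
  have hdvd : ((p : ℤ) ^ r) ∣ ((∏ i, (l' i : ℤ)) - ∏ i, (l i : ℤ)) :=
    dvd_prod_sub _ _ _ _ fun i => (dvd_sub_comm.mp (hcong i))
  have := (Padic.norm_int_le_pow_iff_dvd ((∏ i, (l' i : ℤ)) - ∏ i, (l i : ℤ)) r).mpr hdvd
  simpa using this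

def Rset (n m p r : ℕ) : Finset (Fin n → ℕ) :=
  (Fintype.piFinset fun _ : Fin n => Finset.Ioo 0 (m * p ^ r + 1)).filter
      (fun l : Fin n → ℕ => (∑ i, l i) = m * p ^ r ∧ ∀ i, ¬ p ∣ l i)

lemma mem_Rset {n m p r : ℕ} {l : Fin n → ℕ} :
    l ∈ Rset n m p r ↔ (∀ i, 0 < l i) ∧ (∑ i, l i) = m * p ^ r ∧ ∀ i, ¬ p ∣ l i := by
  simp only [Rset, mem_filter, Fintype.mem_piFinset, Finset.mem_Ioo]
  constructor
  · rintro ⟨h1, h2⟩; exact ⟨fun i => (h1 i).1, h2⟩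
  · rintro ⟨h1, h2, h3⟩
    refine ⟨fun i => ⟨h1 i, ?_⟩, h2, h3⟩
    have : l i ≤ ∑ j, l j := Finset.single_le_sum (fun j _ => Nat.zero_le _) (mem_univ i)
    omega

lemma Rsum_cast (p : ℕ) [Fact p.Prime] (n m r : ℕ) :
    ((Rsum n m p r : ℚ) : ℚ_[p]) = ∑ l ∈ Rset n m p r, (∏ i, (l i : ℚ_[p]))⁻¹ := by
  rw [Rsum, Rset]
  push_cast
  rfl

def Bset {n : ℕ} (P : ℕ) (l : Fin n → ℕ) : Finset (Fin n) :=
  univ.filter fun i => P < l i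

lemma Ssum_eq (p : ℕ) [hp : Fact p.Prime] (m n r : ℕ) (hm : 0 < m) (hr : 0 < r) :
    ((Ssum n m p r : ℚ) : ℚ_[p]) =
      ∑ q ∈ (Rset n m p r).sigma (fun l => (Bset (p ^ r) l).powerset),
        (-1 : ℚ_[p]) ^ q.2.card * (∏ i, (q.1 i : ℚ_[p]))⁻¹ := by
  have hpP : p ∣ p ^ r := dvd_pow_self p hr.ne'
  rw [Finset.sum_sigma]
  have inner : ∀ l : Fin n → ℕ,
      ∑ A ∈ (Bset (p ^ r) l).powerset, (-1 : ℚ_[p]) ^ A.card * (∏ i, (l i : ℚ_[p]))⁻¹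
        = (if Bset (p ^ r) l = ∅ then 1 else 0) * (∏ i, (l i : ℚ_[p]))⁻¹ := by
    intro l
    rw [← Finset.sum_mul]
    congr 1
    have := Finset.sum_powerset_neg_one_pow_card (x := Bset (p ^ r) l)
    calc (∑ A ∈ (Bset (p ^ r) l).powerset, (-1 : ℚ_[p]) ^ A.card)
        = ((∑ A ∈ (Bset (p ^ r) l).powerset, (-1 : ℤ) ^ A.card : ℤ) : ℚ_[p]) := by push_cast; rfl
      _ = _ := by rw [this]; split <;> simp
  simp only [inner, ite_mul, one_mul, zero_mul]
  rw [← Finset.sum_filter]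
  have hset : (Rset n m p r).filter (fun l => Bset (p ^ r) l = ∅)
      = (Fintype.piFinset fun _ : Fin n => Finset.Ioo 0 (p ^ r)).filter
        (fun l : Fin n → ℕ => (∑ i, l i) = m * p ^ r ∧ ∀ i, ¬ p ∣ l i) := by
    ext l
    simp only [mem_filter, Fintype.mem_piFinset, Finset.mem_Ioo, mem_Rset, Bset,
      Finset.filter_eq_empty_iff, mem_univ, not_lt, true_implies]
    constructor
    · rintro ⟨⟨h1, h2, h3⟩, h4⟩
      refine ⟨fun i => ⟨h1 i, ?_⟩, h2, h3⟩
      have := @h4 i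
      have hne : l i ≠ p ^ r := by
        intro he; exact h3 i (he ▸ hpP)
      omega
    · rintro ⟨h1, h2, h3⟩
      exact ⟨⟨fun i => (h1 i).1, h2, h3⟩, by intro i; exact le_of_lt (h1 i).2⟩
  rw [hset, Ssum]
  push_cast
  rfl

lemma choose_sum_eq (p : ℕ) [Fact p.Prime] (m n r : ℕ) :
    (∑ k ∈ Finset.range m,
        (-1 : ℚ_[p]) ^ k * (n.choose k : ℚ_[p]) * ((Rsum n (m - k) p r : ℚ) : ℚ_[p]))
      = ∑ q ∈ ((univ : Finset (Finset (Fin n))).filter (fun A => A.card < m)).sigma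
            (fun A => Rset n (m - A.card) p r),
          (-1 : ℚ_[p]) ^ q.1.card * (∏ i, (q.2 i : ℚ_[p]))⁻¹ := by
  classical
  set g : ℕ → ℚ_[p] := fun k => (-1 : ℚ_[p]) ^ k * ((Rsum n (m - k) p r : ℚ) : ℚ_[p]) with hg
  have hRHS : (∑ q ∈ ((univ : Finset (Finset (Fin n))).filter (fun A => A.card < m)).sigma
            (fun A => Rset n (m - A.card) p r),
          (-1 : ℚ_[p]) ^ q.1.card * (∏ i, (q.2 i : ℚ_[p]))⁻¹)
      = ∑ j ∈ Finset.range (n + 1), (n.choose j) • (if j < m then g j else 0) := by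
    rw [Finset.sum_sigma]
    have h1 : ∀ A : Finset (Fin n), (∑ l ∈ Rset n (m - A.card) p r,
        (-1 : ℚ_[p]) ^ A.card * (∏ i, (l i : ℚ_[p]))⁻¹) = g A.card := by
      intro A
      rw [hg, ← Finset.mul_sum, ← Rsum_cast]
    rw [Finset.sum_congr rfl (fun A _ => h1 A), Finset.sum_filter,
      ← Finset.powerset_univ, Finset.sum_powerset, Finset.card_univ, Fintype.card_fin]
    refine Finset.sum_congr rfl fun j hj => ?_
    have h2 : ∀ A ∈ Finset.powersetCard j (univ : Finset (Fin n)),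
        (if A.card < m then g A.card else 0) = (if j < m then g j else 0) := by
      intro A hA
      rw [(Finset.mem_powersetCard.mp hA).2]
    rw [Finset.sum_congr rfl h2, Finset.sum_const, Finset.card_powersetCard,
      Finset.card_univ, Fintype.card_fin]
  rw [hRHS]
  have hLHS : (∑ k ∈ Finset.range m,
      (-1 : ℚ_[p]) ^ k * (n.choose k : ℚ_[p]) * ((Rsum n (m - k) p r : ℚ) : ℚ_[p]))
      = ∑ k ∈ Finset.range m, (n.choose k) • (if k < m then g k else 0) := by
    refine Finset.sum_congr rfl fun k hk => ?_
    rw [if_pos (Finset.mem_range.mp hk), hg, nsmul_eq_mul]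
    ring
  rw [hLHS]
  rcases le_or_gt m (n + 1) with h | h
  · refine Finset.sum_subset (Finset.range_subset_range.mpr h) (fun k _ hk => ?_)
    rw [if_neg (by simpa using hk)]
    simp
  · refine (Finset.sum_subset (Finset.range_subset_range.mpr h.le) (fun k hk1 hk2 => ?_)).symm
    have : n < k := by simpa using hk2
    rw [Nat.choose_eq_zero_of_lt this]
    simp

lemma sum_ite_card {n : ℕ} (A : Finset (Fin n)) (P : ℕ) :
    (∑ i, if i ∈ A then P else 0) = A.card * P := by
  rw [Finset.sum_ite_mem, Finset.univ_inter, Finset.sum_const, smul_eq_mul]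

lemma bij_eq (p : ℕ) [hp : Fact p.Prime] (m n r : ℕ) (hm : 0 < m) (hr : 0 < r) :
    (∑ q ∈ ((univ : Finset (Finset (Fin n))).filter (fun A => A.card < m)).sigma
            (fun A => Rset n (m - A.card) p r),
          (-1 : ℚ_[p]) ^ q.1.card * (∏ i, (q.2 i : ℚ_[p]))⁻¹)
    = ∑ q ∈ (Rset n m p r).sigma (fun l => (Bset (p ^ r) l).powerset),
        (-1 : ℚ_[p]) ^ q.2.card *
          (∏ i, (((q.1 i - if i ∈ q.2 then p ^ r else 0 : ℕ)) : ℚ_[p]))⁻¹ := by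
  have hp1 : 1 < p := hp.out.one_lt
  have hPpos : 0 < p ^ r := pow_pos (by omega) r
  have hpP : p ∣ p ^ r := dvd_pow_self p hr.ne'
  refine Finset.sum_nbij'
    (i := fun q => ⟨fun i => q.2 i + if i ∈ q.1 then p ^ r else 0, q.1⟩)
    (j := fun q => ⟨q.2, fun i => q.1 i - if i ∈ q.2 then p ^ r else 0⟩)
    ?_ ?_ ?_ ?_ ?_
  · -- hi
    rintro ⟨A, l⟩ hq
    rw [Finset.mem_sigma, Finset.mem_filter] at hq
    obtain ⟨⟨-, hcard⟩, hl⟩ := hq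
    rw [mem_Rset] at hl
    obtain ⟨hpos, hsum, hdvd⟩ := hl
    dsimp only at hpos hsum hdvd ⊢
    rw [Finset.mem_sigma]
    constructor
    · rw [mem_Rset]
      refine ⟨fun i => Nat.lt_of_lt_of_le (hpos i) (Nat.le_add_right _ _), ?_, ?_⟩
      · rw [Finset.sum_add_distrib, hsum, sum_ite_card, ← add_mul,
          Nat.sub_add_cancel hcard.le]
      · intro i hdd
        by_cases hiA : i ∈ A
        · simp only [hiA, if_pos] at hdd
          have : p ∣ l i := by
            have := Nat.dvd_sub hdd hpP
            simpa using this
          exact hdvd i this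
        · simp only [hiA, if_neg, not_false_iff, add_zero] at hdd
          exact hdvd i hdd
    · rw [Finset.mem_powerset]
      intro i hiA
      simp only [Bset, Finset.mem_filter, Finset.mem_univ, true_and, hiA, if_pos]
      have := hpos i
      omega
  · -- hj
    rintro ⟨l, A⟩ hq
    rw [Finset.mem_sigma, Finset.mem_powerset] at hq
    obtain ⟨hl, hA⟩ := hq
    rw [mem_Rset] at hl
    obtain ⟨hpos, hsum, hdvd⟩ := hl
    dsimp only at hpos hsum hdvd hA ⊢
    have hAbig : ∀ i ∈ A, p ^ r < l i := by
      intro i hi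
      have := hA hi
      simpa [Bset] using this
    have hcard : A.card < m := by
      rcases Finset.eq_empty_or_nonempty A with rfl | hAne
      · simpa using hm
      · have h1 : A.card * p ^ r < ∑ i ∈ A, l i := by
          have h0 : ∑ _i ∈ A, p ^ r < ∑ i ∈ A, l i :=
            Finset.sum_lt_sum_of_nonempty hAne hAbig
          simpa using h0
        have h2 : ∑ i ∈ A, l i ≤ m * p ^ r := by
          rw [← hsum]
          exact Finset.sum_le_sum_of_subset (Finset.subset_univ A)
        have := lt_of_lt_of_le h1 h2
        exact lt_of_mul_lt_mul_right this (Nat.zero_le _)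
    rw [Finset.mem_sigma, Finset.mem_filter]
    refine ⟨⟨Finset.mem_univ _, hcard⟩, ?_⟩
    rw [mem_Rset]
    dsimp only
    refine ⟨?_, ?_, ?_⟩
    · intro i
      by_cases hiA : i ∈ A
      · have := hAbig i hiA; simp only [hiA, if_pos]; omega
      · have := hpos i; simp only [hiA, if_neg, not_false_iff]; omega
    · have key : (∑ i, (l i - if i ∈ A then p ^ r else 0)) + A.card * p ^ r = m * p ^ r := by
        rw [← sum_ite_card A (p ^ r), ← Finset.sum_add_distrib, ← hsum]
        refine Finset.sum_congr rfl fun i _ => ?_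
        by_cases hiA : i ∈ A
        · have := hAbig i hiA; simp only [hiA, if_pos]; omega
        · simp [hiA]
      have key2 : (m - A.card) * p ^ r + A.card * p ^ r = m * p ^ r := by
        rw [← add_mul, Nat.sub_add_cancel hcard.le]
      omega
    · intro i hdd
      by_cases hiA : i ∈ A
      · have hbig := hAbig i hiA
        simp only [hiA, if_pos] at hdd
        have : p ∣ l i := by
          have := Nat.dvd_add hdd hpP
          rwa [Nat.sub_add_cancel hbig.le] at this
        exact hdvd i this
      · simp only [hiA, if_neg, not_false_iff, Nat.sub_zero] at hdd
        exact hdvd i hdd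
  · -- left inverse
    rintro ⟨A, l⟩ -
    have : (fun i => (l i + if i ∈ A then p ^ r else 0) - if i ∈ A then p ^ r else 0) = l := by
      funext i
      by_cases hiA : i ∈ A <;> simp [hiA]
    exact congrArg (Sigma.mk A) this
  · -- right inverse
    rintro ⟨l, A⟩ hq
    rw [Finset.mem_sigma, Finset.mem_powerset] at hq
    obtain ⟨hl, hA⟩ := hq
    have hAbig : ∀ i ∈ A, p ^ r < l i := by
      intro i hi
      have := hA hi
      simpa [Bset] using this
    have : (fun i => (l i - if i ∈ A then p ^ r else 0) + if i ∈ A then p ^ r else 0) = l := by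
      funext i
      by_cases hiA : i ∈ A
      · have := hAbig i hiA; simp only [hiA, if_pos]; omega
      · simp [hiA]
    exact congrArg (fun f => (⟨f, A⟩ : (_ : Fin n → ℕ) × Finset (Fin n))) this
  · -- summand equality
    rintro ⟨A, l⟩ -
    dsimp only
    have h : ∀ i, ((l i + if i ∈ A then p ^ r else 0) - (if i ∈ A then p ^ r else 0)) = l i :=
      fun i => by by_cases hiA : i ∈ A <;> simp [hiA]
    simp only [h]

lemma norm_sum_le_padic {α : Type*} (p : ℕ) [Fact p.Prime] (s : Finset α) (f : α → ℚ_[p])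
    (C : ℝ) (hC : 0 ≤ C) (h : ∀ x ∈ s, ‖f x‖ ≤ C) : ‖∑ x ∈ s, f x‖ ≤ C := by
  induction s using Finset.cons_induction with
  | empty => simpa
  | cons a s ha ih =>
    rw [Finset.sum_cons]
    exact (Padic.nonarchimedean _ _).trans
      (max_le (h a (Finset.mem_cons_self a s))
        (ih (fun x hx => h x (Finset.mem_cons_of_mem hx))))


theorem stmt_4 (p : ℕ) [hp : Fact p.Prime] (m n r : ℕ) (hm : 0 < m) (hn : 0 < n)
    (hr : 0 < r) :
    ‖(((Ssum n m p r -
        ∑ k ∈ Finset.range m, (-1 : ℚ) ^ k * (n.choose k) * Rsum n (m - k) p r) : ℚ) : ℚ_[p])‖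
      ≤ (p : ℝ) ^ (-(r : ℤ)) := by
  have hp1 : 1 < p := hp.out.one_lt
  have hpP : p ∣ p ^ r := dvd_pow_self p hr.ne'
  have hcast : (((Ssum n m p r -
        ∑ k ∈ Finset.range m, (-1 : ℚ) ^ k * (n.choose k) * Rsum n (m - k) p r : ℚ)) : ℚ_[p])
      = ((Ssum n m p r : ℚ) : ℚ_[p]) -
        ∑ k ∈ Finset.range m,
          (-1 : ℚ_[p]) ^ k * (n.choose k : ℚ_[p]) * ((Rsum n (m - k) p r : ℚ) : ℚ_[p]) := by
    push_cast
    ring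
  rw [hcast, choose_sum_eq, Ssum_eq p m n r hm hr, bij_eq p m n r hm hr,
    ← Finset.sum_sub_distrib]
  refine norm_sum_le_padic p _ _ _ (by positivity) ?_
  rintro ⟨l, A⟩ hq
  rw [Finset.mem_sigma, Finset.mem_powerset] at hq
  obtain ⟨hl, hA⟩ := hq
  rw [mem_Rset] at hl
  obtain ⟨hpos, hsum, hdvd⟩ := hl
  dsimp only at hpos hsum hdvd hA ⊢
  rw [← mul_sub, norm_mul, norm_pow, norm_neg, norm_one, one_pow, one_mul]
  refine key_norm p l (fun i => l i - if i ∈ A then p ^ r else 0) hdvd ?_ ?_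
  · intro i hdd
    by_cases hiA : i ∈ A
    · have hbig : p ^ r < l i := by
        have := hA hiA; simpa [Bset] using this
      simp only [hiA, if_pos] at hdd
      have : p ∣ l i := by
        have := Nat.dvd_add hdd hpP
        rwa [Nat.sub_add_cancel hbig.le] at this
      exact hdvd i this
    · simp only [hiA, if_neg, not_false_iff, Nat.sub_zero] at hdd
      exact hdvd i hdd
  · intro i
    by_cases hiA : i ∈ A
    · have hbig : p ^ r < l i := by
        have := hA hiA; simpa [Bset] using this
      simp only [hiA, if_pos]
      rw [Nat.cast_sub hbig.le]
      push_cast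
      simp
    · simp [hiA]
end

section
/- Let p be a prime and m, n positive integers with m·p ≥ n. Then Σ over (l_1,...,l_n) with l_1+···+l_n = m·p and p ∤ l_j for all j of 1/(l_1···l_n) equals (n/(m·p)) · Σ over (l_1,...,l_{n-1}, u) with l_1+···+l_{n-1} = u < m·p, p ∤ l_j for all j, and p ∤ u, of 1/(l_1···l_{n-1}). -/
open Finset

theorem stmt_9 (p m n : ℕ) (hp : p.Prime) (hm : 0 < m) (hn : 0 < n)
    (hmn : n ≤ m * p) :
    ∑ l ∈ (Fintype.piFinset fun _ : Fin n => Finset.Ioo 0 (m * p + 1)).filter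
        (fun l : Fin n → ℕ => (∑ i, l i) = m * p ∧ ∀ i, ¬ p ∣ l i),
      (∏ i, (l i : ℚ))⁻¹
    = (n : ℚ) / (m * p) *
      ∑ l ∈ (Fintype.piFinset fun _ : Fin (n - 1) => Finset.Ioo 0 (m * p)).filter
          (fun l : Fin (n - 1) → ℕ =>
            (∀ i, ¬ p ∣ l i) ∧ (∑ i, l i) < m * p ∧ ¬ p ∣ (∑ i, l i)),
        (∏ i, (l i : ℚ))⁻¹ := by
  obtain ⟨k, rfl⟩ : ∃ k, n = k + 1 := ⟨n - 1, (Nat.succ_pred_eq_of_pos hn).symm⟩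
  set M := m * p with hMdef
  have hMpos : 0 < M := lt_of_lt_of_le hn hmn
  have hMQ : (M : ℚ) ≠ 0 := by exact_mod_cast hMpos.ne'
  have hpM : p ∣ M := ⟨m, mul_comm m p⟩
  set S := (Fintype.piFinset fun _ : Fin (k+1) => Finset.Ioo 0 (M + 1)).filter
      (fun l : Fin (k+1) → ℕ => (∑ i, l i) = M ∧ ∀ i, ¬ p ∣ l i) with hS
  set T := (Fintype.piFinset fun _ : Fin k => Finset.Ioo 0 M).filter
      (fun l : Fin k → ℕ =>
        (∀ i, ¬ p ∣ l i) ∧ (∑ i, l i) < M ∧ ¬ p ∣ (∑ i, l i)) with hT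
  -- key: for each j, the j-weighted sum over S equals the sum over T
  have key : ∀ j : Fin (k+1), ∑ l ∈ S, (l j : ℚ) * (∏ i, (l i : ℚ))⁻¹
      = ∑ l ∈ T, (∏ i, (l i : ℚ))⁻¹ := by
    intro j
    have memS : ∀ l : Fin (k+1) → ℕ, l ∈ S ↔
        (∀ i, 0 < l i ∧ l i < M + 1) ∧ (∑ i, l i) = M ∧ ∀ i, ¬ p ∣ l i := by
      intro l
      simp [hS, Fintype.mem_piFinset, Finset.mem_Ioo]
    have memT : ∀ l : Fin k → ℕ, l ∈ T ↔
        (∀ i, 0 < l i ∧ l i < M) ∧ (∀ i, ¬ p ∣ l i) ∧ (∑ i, l i) < M ∧ ¬ p ∣ (∑ i, l i) := by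
      intro l
      simp [hT, Fintype.mem_piFinset, Finset.mem_Ioo]
    refine Finset.sum_bij' (fun l _ => j.removeNth l)
      (fun l' _ => j.insertNth (α := fun _ => ℕ) (M - ∑ i, l' i) l') ?_ ?_ ?_ ?_ ?_
    · intro l hl
      rw [memS] at hl
      obtain ⟨hbd, hsum, hnd⟩ := hl
      have hsplit : (∑ i, l i) = l j + ∑ i, j.removeNth l i :=
        Fin.sum_univ_succAbove l j
      have hsum' : (∑ i : Fin k, j.removeNth l i) = M - l j := by omega
      show j.removeNth l ∈ T
      rw [memT]
      refine ⟨?_, fun i => hnd _, ?_, ?_⟩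
      · intro i
        refine ⟨(hbd _).1, ?_⟩
        have hle : j.removeNth l i ≤ ∑ i : Fin k, j.removeNth l i :=
          Finset.single_le_sum (f := fun i => j.removeNth l i)
            (fun _ _ => Nat.zero_le _) (Finset.mem_univ i)
        have := (hbd j).1
        omega
      · have := (hbd j).1
        omega
      · rw [hsum']
        intro hdvd
        refine hnd j ?_
        have h1 : p ∣ M - (M - l j) := Nat.dvd_sub hpM hdvd
        have hlj : l j ≤ M := by omega
        rwa [Nat.sub_sub_self hlj] at h1
    · intro l' hl'
      rw [memT] at hl'
      obtain ⟨hbd, hnd, hlt, hnds⟩ := hl'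
      show j.insertNth (α := fun _ => ℕ) (M - ∑ i, l' i) l' ∈ S
      rw [memS]
      have hins : ∀ i : Fin k, j.insertNth (α := fun _ => ℕ) (M - ∑ i, l' i) l' (j.succAbove i) = l' i := by
        intro i; simp
      have hj : j.insertNth (α := fun _ => ℕ) (M - ∑ i, l' i) l' j = M - ∑ i, l' i := by
        simp
      have hsplit : (∑ i, j.insertNth (α := fun _ => ℕ) (M - ∑ i, l' i) l' i)
          = (M - ∑ i, l' i) + ∑ i, l' i := by
        rw [Fin.sum_univ_succAbove _ j, hj]
        congr 1
        exact Finset.sum_congr rfl fun i _ => hins i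
      refine ⟨?_, by omega, ?_⟩
      · intro i
        rcases eq_or_ne i j with rfl | hne
        · rw [hj]; omega
        · obtain ⟨i', rfl⟩ := Fin.exists_succAbove_eq hne
          rw [hins]; have := hbd i'; omega
      · intro i
        rcases eq_or_ne i j with rfl | hne
        · rw [hj]
          intro hdvd
          refine hnds ?_
          have h1 : p ∣ M - (M - ∑ i, l' i) := Nat.dvd_sub hpM hdvd
          rwa [Nat.sub_sub_self hlt.le] at h1
        · obtain ⟨i', rfl⟩ := Fin.exists_succAbove_eq hne
          rw [hins]; exact hnd i'
    · intro l hl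
      rw [memS] at hl
      obtain ⟨hbd, hsum, hnd⟩ := hl
      have hsplit : (∑ i, l i) = l j + ∑ i, j.removeNth l i :=
        Fin.sum_univ_succAbove l j
      have hsum' : (∑ i : Fin k, j.removeNth l i) = M - l j := by omega
      show j.insertNth (α := fun _ => ℕ) (M - ∑ i, j.removeNth l i) (j.removeNth l) = l
      rw [hsum']
      have h2 : M - (M - l j) = l j := by omega
      rw [h2]
      exact Fin.insertNth_self_removeNth j l
    · intro l' _
      show j.removeNth (j.insertNth (α := fun _ => ℕ) (M - ∑ i, l' i) l') = l'
      exact Fin.removeNth_insertNth (α := fun _ => ℕ) j _ l'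
    · intro l hl
      rw [memS] at hl
      obtain ⟨hbd, hsum, hnd⟩ := hl
      have hprod : (∏ i, (l i : ℚ)) = (l j : ℚ) * ∏ i : Fin k, (l (j.succAbove i) : ℚ) :=
        Fin.prod_univ_succAbove _ j
      have hlj : (l j : ℚ) ≠ 0 := by
        exact_mod_cast (hbd j).1.ne'
      have hrest : (∏ i : Fin k, (l (j.succAbove i) : ℚ)) ≠ 0 := by
        refine Finset.prod_ne_zero_iff.2 fun i _ => ?_
        exact_mod_cast (hbd _).1.ne'
      show (l j : ℚ) * (∏ i, (l i : ℚ))⁻¹ = (∏ i : Fin k, (l (j.succAbove i) : ℚ))⁻¹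
      rw [hprod]
      field_simp
  -- main computation
  calc ∑ l ∈ S, (∏ i, (l i : ℚ))⁻¹
      = ∑ l ∈ S, (M : ℚ)⁻¹ * ∑ j, (l j : ℚ) * (∏ i, (l i : ℚ))⁻¹ := by
        refine Finset.sum_congr rfl fun l hl => ?_
        have hsum : (∑ j, (l j : ℚ)) = M := by
          rw [hS, Finset.mem_filter] at hl
          exact_mod_cast congrArg (Nat.cast : ℕ → ℚ) hl.2.1
        rw [← Finset.sum_mul, hsum, inv_mul_cancel_left₀ hMQ]
    _ = (M : ℚ)⁻¹ * ∑ j : Fin (k+1), ∑ l ∈ S, (l j : ℚ) * (∏ i, (l i : ℚ))⁻¹ := by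
        rw [← Finset.mul_sum, Finset.sum_comm]
    _ = (M : ℚ)⁻¹ * ∑ j : Fin (k+1), ∑ l ∈ T, (∏ i, (l i : ℚ))⁻¹ := by
        rw [Finset.sum_congr rfl fun j _ => key j]
    _ = ((k+1 : ℕ) : ℚ) / (↑m * ↑p) * ∑ l ∈ T, (∏ i, (l i : ℚ))⁻¹ := by
        rw [Finset.sum_const, Finset.card_univ, Fintype.card_fin, hMdef]
        push_cast
        ring
end

section
/- For every prime p ≥ 5, R_3^{(2)}(p) ≡ -4·B_{p-3} (mod p), i.e., Σ_{i+j+k=2p, p∤ijk} 1/(ijk) ≡ -4·B_{p-3} (mod p), where the sum runs over positive integers i, j, k not divisible by p. -/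
open Finset

namespace Stmt11Aux

lemma not_dvd_of_lt' {d a : ℕ} (h0 : 0 < a) (h1 : a < d) : ¬ d ∣ a :=
  fun hd => absurd (Nat.le_of_dvd h0 hd) (by omega)

variable (p : ℕ) [hp : Fact p.Prime]

lemma ppos : 0 < p := hp.out.pos

lemma cast_ne_zero {a : ℕ} (h0 : 0 < a) (h1 : a < p) : (a : ZMod p) ≠ 0 := by
  rw [Ne, ZMod.natCast_eq_zero_iff]
  exact not_dvd_of_lt' h0 h1

lemma inv_eq_pow {x : ZMod p} (hx : x ≠ 0) : x⁻¹ = x ^ (p - 2) := by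
  have h2 : 2 ≤ p := hp.out.two_le
  have h1 : x * x ^ (p - 2) = 1 := by
    have hs : x * x ^ (p - 2) = x ^ (p - 1) := by
      rw [← pow_succ']
      congr 1
      omega
    rw [hs]
    exact ZMod.pow_card_sub_one_eq_one hx
  exact inv_eq_of_mul_eq_one_right h1

lemma sum_univ_pow (e : ℕ) (he : 0 < e) :
    ∑ x : ZMod p, x ^ e = if (p - 1) ∣ e then (-1 : ZMod p) else 0 := by
  haveI : NeZero p := ⟨(ppos p).ne'⟩
  have h2 : 2 ≤ p := hp.out.two_le
  induction e using Nat.strong_induction_on with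
  | _ e ih =>
  rcases lt_trichotomy e (p - 1) with hlt | heq | hgt
  · rw [if_neg (not_dvd_of_lt' he hlt)]
    have := FiniteField.sum_pow_lt_card_sub_one (ZMod p) e (by rwa [ZMod.card])
    exact this
  · rw [if_pos (heq ▸ dvd_rfl)]
    have hstep : ∀ x : ZMod p, x ^ e = if x = 0 then 0 else 1 := by
      intro x
      split_ifs with hx0
      · subst hx0; exact zero_pow he.ne'
      · rw [heq]; exact ZMod.pow_card_sub_one_eq_one hx0
    rw [Finset.sum_congr rfl (fun x _ => hstep x)]
    rw [← Finset.add_sum_erase _ _ (Finset.mem_univ (0 : ZMod p))]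
    rw [if_pos rfl, zero_add]
    rw [Finset.sum_congr rfl (fun x hx => if_neg (Finset.mem_erase.1 hx).1)]
    rw [Finset.sum_const, Finset.card_erase_of_mem (Finset.mem_univ _), Finset.card_univ,
      ZMod.card, nsmul_eq_mul, mul_one]
    rw [Nat.cast_sub (by omega), ZMod.natCast_self, Nat.cast_one, zero_sub]
  · have h1 : ∑ x : ZMod p, x ^ e = ∑ x : ZMod p, x ^ (e - (p - 1)) := by
      refine Finset.sum_congr rfl fun x _ => ?_
      rcases eq_or_ne x 0 with rfl | hx
      · rw [zero_pow (by omega), zero_pow (by omega)]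
      · conv_lhs => rw [show e = (e - (p - 1)) + (p - 1) by omega]
        rw [pow_add, ZMod.pow_card_sub_one_eq_one hx, mul_one]
    rw [h1, ih (e - (p - 1)) (by omega) (by omega)]
    have hiff : (p - 1) ∣ (e - (p - 1)) ↔ (p - 1) ∣ e := by
      constructor
      · intro h
        have h2' := Nat.dvd_add h (dvd_refl (p - 1))
        rwa [Nat.sub_add_cancel (by omega)] at h2'
      · intro h; exact Nat.dvd_sub h dvd_rfl
    simp only [hiff]

lemma sum_Ico_pow (e : ℕ) (he : 0 < e) :
    ∑ s ∈ Ico 1 p, ((s : ZMod p)) ^ e = if (p - 1) ∣ e then (-1 : ZMod p) else 0 := by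
  haveI : NeZero p := ⟨(ppos p).ne'⟩
  have h0 : ∑ s ∈ range p, ((s : ZMod p)) ^ e = ∑ s ∈ Ico 1 p, ((s : ZMod p)) ^ e := by
    rw [Finset.range_eq_Ico, Finset.sum_eq_sum_Ico_succ_bot (ppos p)]
    simp [zero_pow he.ne']
  have h1 : ∑ s ∈ range p, ((s : ZMod p)) ^ e = ∑ x : ZMod p, x ^ e := by
    apply Finset.sum_nbij' (fun s : ℕ => (s : ZMod p)) (fun x : ZMod p => x.val)
    · intro a _; exact Finset.mem_univ _
    · intro x _; exact Finset.mem_range.2 (ZMod.val_lt x)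
    · intro a ha; exact ZMod.val_cast_of_lt (Finset.mem_range.1 ha)
    · intro x _; exact ZMod.natCast_zmod_val x
    · intro a _; rfl
  rw [← h0, h1, sum_univ_pow p e he]

lemma norm_nat_le_one (n : ℕ) : ‖(n : ℚ_[p])‖ ≤ 1 := by
  have h := Padic.norm_int_le_one (p := p) (n : ℤ)
  push_cast at h
  exact h

lemma norm_nat_eq_one {n : ℕ} (h : ¬ p ∣ n) : ‖(n : ℚ_[p])‖ = 1 := by
  have h1 := norm_nat_le_one p n
  have h2 : ¬ ‖((n : ℤ) : ℚ_[p])‖ < 1 := fun hlt =>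
    h (Int.natCast_dvd_natCast.1 ((Padic.norm_intCast_lt_one_iff).1 hlt))
  push_cast at h2
  exact le_antisymm h1 (not_lt.1 h2)

lemma bernoulli_norm : ∀ n : ℕ, n + 1 < p → ‖((bernoulli n : ℚ) : ℚ_[p])‖ ≤ 1 := by
  intro n
  induction n using Nat.strong_induction_on with
  | _ n ih =>
  intro hn
  match n with
  | 0 => simp
  | (m + 1) =>
    have hsum := sum_bernoulli (m + 2)
    rw [if_neg (by omega)] at hsum
    rw [Finset.sum_range_succ] at hsum
    have hch : (((m + 2).choose (m + 1) : ℕ) : ℚ) = ((m : ℚ) + 2) := by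
      rw [Nat.choose_succ_self_right]
      push_cast
      ring
    rw [hch] at hsum
    have heq : ((m : ℚ) + 2) * bernoulli (m + 1)
        = - ∑ k ∈ range (m + 1), ((m + 2).choose k : ℚ) * bernoulli k := by
      linarith [hsum]
    have hnorm1 : ‖(((m : ℚ) + 2 : ℚ) : ℚ_[p])‖ = 1 := by
      have h := norm_nat_eq_one p (n := m + 2) (not_dvd_of_lt' (by omega) (by omega))
      rw [show (((m : ℚ) + 2 : ℚ) : ℚ_[p]) = ((m + 2 : ℕ) : ℚ_[p]) by push_cast; ring]
      exact h
    have hb : ‖((bernoulli (m + 1) : ℚ) : ℚ_[p])‖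
        = ‖((∑ k ∈ range (m + 1), ((m + 2).choose k : ℚ) * bernoulli k : ℚ) : ℚ_[p])‖ := by
      have hcast : ((((m : ℚ) + 2) * bernoulli (m + 1) : ℚ) : ℚ_[p])
          = (((m : ℚ) + 2 : ℚ) : ℚ_[p]) * ((bernoulli (m + 1) : ℚ) : ℚ_[p]) := by
        push_cast
        ring
      calc ‖((bernoulli (m + 1) : ℚ) : ℚ_[p])‖
          = ‖(((m : ℚ) + 2 : ℚ) : ℚ_[p])‖ * ‖((bernoulli (m + 1) : ℚ) : ℚ_[p])‖ := by
            rw [hnorm1, one_mul]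
        _ = ‖((((m : ℚ) + 2) * bernoulli (m + 1) : ℚ) : ℚ_[p])‖ := by
            rw [hcast, norm_mul]
        _ = ‖((- ∑ k ∈ range (m + 1), ((m + 2).choose k : ℚ) * bernoulli k : ℚ) : ℚ_[p])‖ := by
            rw [heq]
        _ = ‖((∑ k ∈ range (m + 1), ((m + 2).choose k : ℚ) * bernoulli k : ℚ) : ℚ_[p])‖ := by
            rw [Rat.cast_neg, norm_neg]
    rw [hb, Rat.cast_sum]
    apply IsUltrametricDist.norm_sum_le_of_forall_le_of_nonneg zero_le_one
    intro k hk
    rw [Rat.cast_mul, norm_mul, Rat.cast_natCast]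
    have h1 : ‖(((m + 2).choose k : ℕ) : ℚ_[p])‖ ≤ 1 := norm_nat_le_one p _
    have h2 : ‖((bernoulli k : ℚ) : ℚ_[p])‖ ≤ 1 :=
      ih k (by rw [Finset.mem_range] at hk; omega) (by rw [Finset.mem_range] at hk; omega)
    calc ‖(((m + 2).choose k : ℕ) : ℚ_[p])‖ * ‖((bernoulli k : ℚ) : ℚ_[p])‖
        ≤ 1 * 1 := mul_le_mul h1 h2 (norm_nonneg _) zero_le_one
      _ = 1 := by norm_num

def g (l : Fin 3 → ℕ) : ZMod p := ((l 0 : ZMod p) * (l 1 : ZMod p) * (l 2 : ZMod p))⁻¹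

def Fs : Finset (Fin 3 → ℕ) :=
  (Fintype.piFinset fun _ : Fin 3 => Finset.Ioo 0 (2 * p)).filter
    (fun l : Fin 3 → ℕ => l 0 + l 1 + l 2 = 2 * p ∧ ∀ i, ¬ p ∣ l i)

def P1 : Finset (Fin 3 → ℕ) :=
  (Fintype.piFinset fun _ : Fin 3 => Finset.Ioo 0 p).filter
    (fun l : Fin 3 → ℕ => l 0 + l 1 + l 2 = p)

lemma forall_fin3 {P : Fin 3 → Prop} : (∀ i, P i) ↔ P 0 ∧ P 1 ∧ P 2 :=
  ⟨fun h => ⟨h 0, h 1, h 2⟩, fun h i => by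
    fin_cases i
    · exact h.1
    · exact h.2.1
    · exact h.2.2⟩

lemma mem_Fs {l : Fin 3 → ℕ} : l ∈ Fs p ↔
    (0 < l 0 ∧ l 0 < 2 * p) ∧ (0 < l 1 ∧ l 1 < 2 * p) ∧ (0 < l 2 ∧ l 2 < 2 * p) ∧
    l 0 + l 1 + l 2 = 2 * p ∧ ¬ p ∣ l 0 ∧ ¬ p ∣ l 1 ∧ ¬ p ∣ l 2 := by
  simp only [Fs, Finset.mem_filter, Fintype.mem_piFinset, Finset.mem_Ioo, forall_fin3]
  tauto

lemma mem_P1 {l : Fin 3 → ℕ} : l ∈ P1 p ↔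
    (0 < l 0 ∧ l 0 < p) ∧ (0 < l 1 ∧ l 1 < p) ∧ (0 < l 2 ∧ l 2 < p) ∧
    l 0 + l 1 + l 2 = p := by
  simp only [P1, Finset.mem_filter, Fintype.mem_piFinset, Finset.mem_Ioo, forall_fin3]
  tauto

lemma vec3_0 (a b c : ℕ) : ![a, b, c] 0 = a := rfl
lemma vec3_1 (a b c : ℕ) : ![a, b, c] 1 = b := rfl
lemma vec3_2 (a b c : ℕ) : ![a, b, c] 2 = c := rfl

lemma cast_sub_p {a : ℕ} (h : p ≤ a) : ((a - p : ℕ) : ZMod p) = (a : ZMod p) := by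
  rw [Nat.cast_sub h, ZMod.natCast_self, sub_zero]

lemma cast_p_sub {a : ℕ} (h : a ≤ p) : ((p - a : ℕ) : ZMod p) = -(a : ZMod p) := by
  rw [Nat.cast_sub h, ZMod.natCast_self, zero_sub]

lemma sumF0 : ∑ l ∈ (Fs p).filter (fun l => p < l 0), g p l = ∑ l ∈ P1 p, g p l := by
  apply Finset.sum_nbij' (fun l : Fin 3 → ℕ => ![l 0 - p, l 1, l 2])
    (fun m : Fin 3 → ℕ => ![m 0 + p, m 1, m 2])
  · intro l hl
    rw [Finset.mem_filter] at hl
    obtain ⟨hl, hgt⟩ := hl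
    rw [mem_Fs] at hl
    obtain ⟨⟨h1, h2⟩, ⟨h3, h4⟩, ⟨h5, h6⟩, h7, hd1, hd2, hd3⟩ := hl
    rw [mem_P1]
    simp only [vec3_0, vec3_1, vec3_2]
    omega
  · intro m hm
    rw [mem_P1] at hm
    obtain ⟨⟨h1, h2⟩, ⟨h3, h4⟩, ⟨h5, h6⟩, h7⟩ := hm
    rw [Finset.mem_filter, mem_Fs]
    simp only [vec3_0, vec3_1, vec3_2]
    refine ⟨⟨by omega, by omega, by omega, by omega, ?_, ?_, ?_⟩, by omega⟩
    · intro hd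
      have : p ∣ m 0 := by
        have h8 := Nat.dvd_sub hd (dvd_refl p)
        rwa [Nat.add_sub_cancel] at h8
      exact absurd (Nat.le_of_dvd h1 this) (by omega)
    · exact not_dvd_of_lt' h3 h4
    · exact not_dvd_of_lt' h5 h6
  · intro l hl
    rw [Finset.mem_filter] at hl
    obtain ⟨_, hgt⟩ := hl
    funext i
    fin_cases i <;> simp [vec3_0, vec3_1, vec3_2] <;> omega
  · intro m hm
    funext i
    fin_cases i <;> simp [vec3_0, vec3_1, vec3_2]
  · intro l hl
    rw [Finset.mem_filter] at hl
    obtain ⟨_, hgt⟩ := hl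
    simp only [g, vec3_0, vec3_1, vec3_2, cast_sub_p p (le_of_lt hgt)]

lemma sumF1 : ∑ l ∈ (Fs p).filter (fun l => p < l 1), g p l = ∑ l ∈ P1 p, g p l := by
  apply Finset.sum_nbij' (fun l : Fin 3 → ℕ => ![l 0, l 1 - p, l 2])
    (fun m : Fin 3 → ℕ => ![m 0, m 1 + p, m 2])
  · intro l hl
    rw [Finset.mem_filter] at hl
    obtain ⟨hl, hgt⟩ := hl
    rw [mem_Fs] at hl
    obtain ⟨⟨h1, h2⟩, ⟨h3, h4⟩, ⟨h5, h6⟩, h7, hd1, hd2, hd3⟩ := hl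
    rw [mem_P1]
    simp only [vec3_0, vec3_1, vec3_2]
    omega
  · intro m hm
    rw [mem_P1] at hm
    obtain ⟨⟨h1, h2⟩, ⟨h3, h4⟩, ⟨h5, h6⟩, h7⟩ := hm
    rw [Finset.mem_filter, mem_Fs]
    simp only [vec3_0, vec3_1, vec3_2]
    refine ⟨⟨by omega, by omega, by omega, by omega, ?_, ?_, ?_⟩, by omega⟩
    · exact not_dvd_of_lt' h1 h2
    · intro hd
      have : p ∣ m 1 := by
        have h8 := Nat.dvd_sub hd (dvd_refl p)
        rwa [Nat.add_sub_cancel] at h8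
      exact absurd (Nat.le_of_dvd h3 this) (by omega)
    · exact not_dvd_of_lt' h5 h6
  · intro l hl
    rw [Finset.mem_filter] at hl
    obtain ⟨_, hgt⟩ := hl
    funext i
    fin_cases i <;> simp [vec3_0, vec3_1, vec3_2] <;> omega
  · intro m hm
    funext i
    fin_cases i <;> simp [vec3_0, vec3_1, vec3_2]
  · intro l hl
    rw [Finset.mem_filter] at hl
    obtain ⟨_, hgt⟩ := hl
    simp only [g, vec3_0, vec3_1, vec3_2, cast_sub_p p (le_of_lt hgt)]

lemma sumF2 : ∑ l ∈ (Fs p).filter (fun l => p < l 2), g p l = ∑ l ∈ P1 p, g p l := by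
  apply Finset.sum_nbij' (fun l : Fin 3 → ℕ => ![l 0, l 1, l 2 - p])
    (fun m : Fin 3 → ℕ => ![m 0, m 1, m 2 + p])
  · intro l hl
    rw [Finset.mem_filter] at hl
    obtain ⟨hl, hgt⟩ := hl
    rw [mem_Fs] at hl
    obtain ⟨⟨h1, h2⟩, ⟨h3, h4⟩, ⟨h5, h6⟩, h7, hd1, hd2, hd3⟩ := hl
    rw [mem_P1]
    simp only [vec3_0, vec3_1, vec3_2]
    omega
  · intro m hm
    rw [mem_P1] at hm
    obtain ⟨⟨h1, h2⟩, ⟨h3, h4⟩, ⟨h5, h6⟩, h7⟩ := hm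
    rw [Finset.mem_filter, mem_Fs]
    simp only [vec3_0, vec3_1, vec3_2]
    refine ⟨⟨by omega, by omega, by omega, by omega, ?_, ?_, ?_⟩, by omega⟩
    · exact not_dvd_of_lt' h1 h2
    · exact not_dvd_of_lt' h3 h4
    · intro hd
      have : p ∣ m 2 := by
        have h8 := Nat.dvd_sub hd (dvd_refl p)
        rwa [Nat.add_sub_cancel] at h8
      exact absurd (Nat.le_of_dvd h5 this) (by omega)
  · intro l hl
    rw [Finset.mem_filter] at hl
    obtain ⟨_, hgt⟩ := hl
    funext i
    fin_cases i <;> simp [vec3_0, vec3_1, vec3_2] <;> omega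
  · intro m hm
    funext i
    fin_cases i <;> simp [vec3_0, vec3_1, vec3_2]
  · intro l hl
    rw [Finset.mem_filter] at hl
    obtain ⟨_, hgt⟩ := hl
    simp only [g, vec3_0, vec3_1, vec3_2, cast_sub_p p (le_of_lt hgt)]

lemma sumFsmall : ∑ l ∈ (Fs p).filter (fun l => ∀ i, l i < p), g p l = - ∑ l ∈ P1 p, g p l := by
  have h : ∑ l ∈ (Fs p).filter (fun l => ∀ i, l i < p), g p l = ∑ m ∈ P1 p, - g p m := by
    apply Finset.sum_nbij' (fun l : Fin 3 → ℕ => ![p - l 0, p - l 1, p - l 2])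
      (fun m : Fin 3 → ℕ => ![p - m 0, p - m 1, p - m 2])
    · intro l hl
      rw [Finset.mem_filter, forall_fin3] at hl
      obtain ⟨hl, hs0, hs1, hs2⟩ := hl
      rw [mem_Fs] at hl
      obtain ⟨⟨h1, h2⟩, ⟨h3, h4⟩, ⟨h5, h6⟩, h7, hd1, hd2, hd3⟩ := hl
      rw [mem_P1]
      simp only [vec3_0, vec3_1, vec3_2]
      omega
    · intro m hm
      rw [mem_P1] at hm
      obtain ⟨⟨h1, h2⟩, ⟨h3, h4⟩, ⟨h5, h6⟩, h7⟩ := hm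
      rw [Finset.mem_filter, mem_Fs, forall_fin3]
      simp only [vec3_0, vec3_1, vec3_2]
      refine ⟨⟨by omega, by omega, by omega, by omega, ?_, ?_, ?_⟩, by omega, by omega, by omega⟩
      · exact not_dvd_of_lt' (by omega) (by omega)
      · exact not_dvd_of_lt' (by omega) (by omega)
      · exact not_dvd_of_lt' (by omega) (by omega)
    · intro l hl
      rw [Finset.mem_filter, forall_fin3] at hl
      obtain ⟨hl, hs0, hs1, hs2⟩ := hl
      funext i
      fin_cases i <;> simp [vec3_0, vec3_1, vec3_2] <;> omega
    · intro m hm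
      rw [mem_P1] at hm
      obtain ⟨⟨h1, h2⟩, ⟨h3, h4⟩, ⟨h5, h6⟩, h7⟩ := hm
      funext i
      fin_cases i <;> simp [vec3_0, vec3_1, vec3_2] <;> omega
    · intro l hl
      rw [Finset.mem_filter, forall_fin3] at hl
      obtain ⟨hl, hs0, hs1, hs2⟩ := hl
      simp only [g, vec3_0, vec3_1, vec3_2,
        cast_p_sub p (le_of_lt hs0), cast_p_sub p (le_of_lt hs1), cast_p_sub p (le_of_lt hs2)]
      rw [show (-(l 0 : ZMod p)) * (-(l 1 : ZMod p)) * (-(l 2 : ZMod p))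
          = -((l 0 : ZMod p) * (l 1 : ZMod p) * (l 2 : ZMod p)) by ring, inv_neg, neg_neg]
  rw [h, Finset.sum_neg_distrib]

lemma sum_Fs_split : ∑ l ∈ Fs p, g p l = 2 * ∑ l ∈ P1 p, g p l := by
  classical
  have e1 : ((Fs p).filter (fun l => ¬ p < l 0)).filter (fun l => p < l 1)
      = (Fs p).filter (fun l => p < l 1) := by
    ext l
    simp only [Finset.mem_filter, and_assoc]
    constructor
    · rintro ⟨hF, -, h1⟩; exact ⟨hF, h1⟩
    · rintro ⟨hF, h1⟩
      have hm := (mem_Fs p).1 hF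
      obtain ⟨⟨a1, a2⟩, ⟨a3, a4⟩, ⟨a5, a6⟩, a7, hd1, hd2, hd3⟩ := hm
      exact ⟨hF, by omega, h1⟩
  have e2 : (((Fs p).filter (fun l => ¬ p < l 0)).filter (fun l => ¬ p < l 1)).filter
        (fun l => p < l 2) = (Fs p).filter (fun l => p < l 2) := by
    ext l
    simp only [Finset.mem_filter, and_assoc]
    constructor
    · rintro ⟨hF, -, -, h1⟩; exact ⟨hF, h1⟩
    · rintro ⟨hF, h1⟩
      have hm := (mem_Fs p).1 hF
      obtain ⟨⟨a1, a2⟩, ⟨a3, a4⟩, ⟨a5, a6⟩, a7, hd1, hd2, hd3⟩ := hm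
      exact ⟨hF, by omega, by omega, h1⟩
  have e3 : (((Fs p).filter (fun l => ¬ p < l 0)).filter (fun l => ¬ p < l 1)).filter
        (fun l => ¬ p < l 2) = (Fs p).filter (fun l => ∀ i, l i < p) := by
    ext l
    simp only [Finset.mem_filter, and_assoc, forall_fin3]
    constructor
    · rintro ⟨hF, h1, h2, h3⟩
      have hm := (mem_Fs p).1 hF
      obtain ⟨⟨a1, a2⟩, ⟨a3, a4⟩, ⟨a5, a6⟩, a7, hd1, hd2, hd3⟩ := hm
      have hne0 : l 0 ≠ p := fun h => hd1 (h ▸ dvd_rfl)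
      have hne1 : l 1 ≠ p := fun h => hd2 (h ▸ dvd_rfl)
      have hne2 : l 2 ≠ p := fun h => hd3 (h ▸ dvd_rfl)
      exact ⟨hF, by omega, by omega, by omega⟩
    · rintro ⟨hF, h1, h2, h3⟩
      exact ⟨hF, by omega, by omega, by omega⟩
  have h1 := Finset.sum_filter_add_sum_filter_not (Fs p) (fun l => p < l 0) (g p)
  have h2 := Finset.sum_filter_add_sum_filter_not ((Fs p).filter (fun l => ¬ p < l 0))
    (fun l => p < l 1) (g p)
  have h3 := Finset.sum_filter_add_sum_filter_not
    (((Fs p).filter (fun l => ¬ p < l 0)).filter (fun l => ¬ p < l 1)) (fun l => p < l 2) (g p)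
  rw [e1] at h2
  rw [e2, e3] at h3
  rw [← h1, ← h2, ← h3, sumF0, sumF1, sumF2, sumFsmall]
  ring

lemma sum_P1_eq : ∑ l ∈ P1 p, g p l
    = - ∑ s ∈ Ico 1 p, ∑ a ∈ Ico 1 s,
        ((a : ZMod p) * ((s - a : ℕ) : ZMod p) * (s : ZMod p))⁻¹ := by
  have h : ∑ l ∈ P1 p, g p l
      = ∑ x ∈ (Ico 1 p).sigma (fun s => Ico 1 s),
          - (((x.2 : ZMod p) * ((x.1 - x.2 : ℕ) : ZMod p) * (x.1 : ZMod p))⁻¹) := by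
    apply Finset.sum_nbij' (fun l : Fin 3 → ℕ => (⟨l 0 + l 1, l 0⟩ : Σ _ : ℕ, ℕ))
      (fun x : Σ _ : ℕ, ℕ => ![x.2, x.1 - x.2, p - x.1])
    · intro l hl
      rw [mem_P1] at hl
      obtain ⟨⟨h1, h2⟩, ⟨h3, h4⟩, ⟨h5, h6⟩, h7⟩ := hl
      simp only [Finset.mem_sigma, Finset.mem_Ico]
      omega
    · intro x hx
      rw [Finset.mem_sigma, Finset.mem_Ico, Finset.mem_Ico] at hx
      rw [mem_P1]
      simp only [vec3_0, vec3_1, vec3_2]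
      omega
    · intro l hl
      rw [mem_P1] at hl
      obtain ⟨⟨h1, h2⟩, ⟨h3, h4⟩, ⟨h5, h6⟩, h7⟩ := hl
      funext i
      fin_cases i <;> simp [vec3_0, vec3_1, vec3_2] <;> omega
    · intro x hx
      rw [Finset.mem_sigma, Finset.mem_Ico, Finset.mem_Ico] at hx
      simp only [vec3_0, vec3_1, vec3_2]
      have hx1 : x.2 + (x.1 - x.2) = x.1 := by omega
      rw [hx1]
    · intro l hl
      rw [mem_P1] at hl
      obtain ⟨⟨h1, h2⟩, ⟨h3, h4⟩, ⟨h5, h6⟩, h7⟩ := hl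
      simp only [g]
      have hl1 : (l 0 + l 1) - l 0 = l 1 := by omega
      have hl2 : (l 2 : ZMod p) = -(((l 0 + l 1 : ℕ) : ZMod p)) := by
        have : ((l 2 : ℕ) : ZMod p) + ((l 0 + l 1 : ℕ) : ZMod p) = ((p : ℕ) : ZMod p) := by
          rw [← Nat.cast_add]
          congr 1
          omega
        rw [ZMod.natCast_self] at this
        exact eq_neg_of_add_eq_zero_left this
      rw [hl1, hl2, show ((l 0 : ZMod p)) * (l 1 : ZMod p) * (-(((l 0 + l 1 : ℕ) : ZMod p)))
        = -((l 0 : ZMod p) * (l 1 : ZMod p) * ((l 0 + l 1 : ℕ) : ZMod p)) by ring, inv_neg]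
  rw [h, Finset.sum_neg_distrib, Finset.sum_sigma]

lemma W_eq (hp5 : 5 ≤ p) :
    ∑ s ∈ Ico 1 p, ∑ a ∈ Ico 1 s, ((a : ZMod p) * ((s - a : ℕ) : ZMod p) * (s : ZMod p))⁻¹
    = 2 * ∑ s ∈ Ico 1 p, (s : ZMod p) ^ (p - 3) * ∑ i ∈ range s, (i : ZMod p) ^ (p - 2) := by
  rw [Finset.mul_sum]
  refine Finset.sum_congr rfl fun s hs => ?_
  rw [Finset.mem_Ico] at hs
  have hsne : (s : ZMod p) ≠ 0 := cast_ne_zero p hs.1 hs.2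
  have hterm : ∀ a ∈ Ico 1 s, ((a : ZMod p) * ((s - a : ℕ) : ZMod p) * (s : ZMod p))⁻¹
      = (s : ZMod p) ^ (p - 3) * ((a : ZMod p) ^ (p - 2) + ((s - a : ℕ) : ZMod p) ^ (p - 2)) := by
    intro a ha
    rw [Finset.mem_Ico] at ha
    have hane : (a : ZMod p) ≠ 0 := cast_ne_zero p ha.1 (by omega)
    have hbne : ((s - a : ℕ) : ZMod p) ≠ 0 := cast_ne_zero p (by omega) (by omega)
    have hsum : (a : ZMod p) + ((s - a : ℕ) : ZMod p) = (s : ZMod p) := by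
      rw [← Nat.cast_add]
      congr 1
      omega
    have hz3 : (s : ZMod p) ^ (p - 3) = ((s : ZMod p) * (s : ZMod p))⁻¹ := by
      symm
      apply inv_eq_of_mul_eq_one_right
      rw [show (s : ZMod p) * (s : ZMod p) * (s : ZMod p) ^ (p - 3) = (s : ZMod p) ^ (2 + (p - 3))
        by rw [pow_add]; ring]
      rw [show 2 + (p - 3) = p - 1 by omega]
      exact ZMod.pow_card_sub_one_eq_one hsne
    rw [← inv_eq_pow p hane, ← inv_eq_pow p hbne, hz3, ← hsum]
    have hxy : (a : ZMod p) + ((s - a : ℕ) : ZMod p) ≠ 0 := by rw [hsum]; exact hsne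
    field_simp
    ring
  rw [Finset.sum_congr rfl hterm, ← Finset.mul_sum, Finset.sum_add_distrib]
  have hrefl : ∑ a ∈ Ico 1 s, ((s - a : ℕ) : ZMod p) ^ (p - 2)
      = ∑ a ∈ Ico 1 s, (a : ZMod p) ^ (p - 2) := by
    apply Finset.sum_nbij' (fun a : ℕ => s - a) (fun a : ℕ => s - a)
    · intro a ha; rw [Finset.mem_Ico] at ha ⊢; omega
    · intro a ha; rw [Finset.mem_Ico] at ha ⊢; omega
    · intro a ha; rw [Finset.mem_Ico] at ha; omega
    · intro a ha; rw [Finset.mem_Ico] at ha; omega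
    · intro a ha; rfl
  have hrange : ∑ i ∈ range s, (i : ZMod p) ^ (p - 2) = ∑ a ∈ Ico 1 s, (a : ZMod p) ^ (p - 2) := by
    rw [Finset.range_eq_Ico, Finset.sum_eq_sum_Ico_succ_bot (by omega : 0 < s)]
    simp [zero_pow (by omega : p - 2 ≠ 0)]
  rw [hrefl, hrange]
  ring

lemma combined (hp5 : 5 ≤ p) :
    ∑ l ∈ Fs p, g p l
      = -4 * ∑ s ∈ Ico 1 p, (s : ZMod p) ^ (p - 3) * ∑ i ∈ range s, (i : ZMod p) ^ (p - 2) := by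
  rw [sum_Fs_split p, sum_P1_eq p, W_eq p hp5]
  ring


lemma coe_sum {α : Type*} (s : Finset α) (f : α → ℤ_[p]) :
    ((∑ i ∈ s, f i : ℤ_[p]) : ℚ_[p]) = ∑ i ∈ s, ((f i : ℤ_[p]) : ℚ_[p]) := by
  classical
  induction s using Finset.induction_on with
  | empty => simp
  | insert _ _ hx ih =>
    rw [Finset.sum_insert hx, Finset.sum_insert hx, PadicInt.coe_add, ih]

lemma faulhaber_q (hp5 : 5 ≤ p) (s : ℕ) :
    ((p : ℚ) - 1) * ∑ i ∈ range s, (i : ℚ) ^ (p - 2)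
      = ∑ j ∈ range (p - 1), bernoulli j * ((p - 1).choose j : ℚ) * (s : ℚ) ^ (p - 1 - j) := by
  have h := sum_range_pow s (p - 2)
  have hc : p - 2 + 1 = p - 1 := by omega
  rw [hc] at h
  have hd : ((p - 2 : ℕ) : ℚ) + 1 = (p : ℚ) - 1 := by
    rw [Nat.cast_sub (by omega : 2 ≤ p)]
    ring
  rw [hd] at h
  rw [h, Finset.mul_sum]
  refine Finset.sum_congr rfl fun j hj => ?_
  have hne : (p : ℚ) - 1 ≠ 0 := by
    have h5 : (5 : ℚ) ≤ (p : ℚ) := by exact_mod_cast hp5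
    linarith
  field_simp

lemma hQ (hp5 : 5 ≤ p) :
    ((p : ℚ) - 1) * ∑ s ∈ Ico 1 p, (s : ℚ) ^ (p - 3) * ∑ i ∈ range s, (i : ℚ) ^ (p - 2)
      = ∑ j ∈ range (p - 1), bernoulli j * ((p - 1).choose j : ℚ)
          * ∑ s ∈ Ico 1 p, (s : ℚ) ^ (2 * p - 4 - j) := by
  rw [Finset.mul_sum]
  have h1 : ∀ s ∈ Ico 1 p, ((p : ℚ) - 1) * ((s : ℚ) ^ (p - 3) * ∑ i ∈ range s, (i : ℚ) ^ (p - 2))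
      = ∑ j ∈ range (p - 1), bernoulli j * ((p - 1).choose j : ℚ) * (s : ℚ) ^ (2 * p - 4 - j) := by
    intro s _
    rw [mul_left_comm, faulhaber_q p hp5 s, Finset.mul_sum]
    refine Finset.sum_congr rfl fun j hj => ?_
    rw [Finset.mem_range] at hj
    rw [mul_left_comm, ← pow_add]
    congr 2
    omega
  rw [Finset.sum_congr rfl h1, Finset.sum_comm]
  refine Finset.sum_congr rfl fun j _ => ?_
  rw [Finset.mul_sum]

lemma key2 (hp5 : 5 ≤ p) (B : ℤ_[p])
    (hB : (B : ℚ_[p]) = ((bernoulli (p - 3) : ℚ) : ℚ_[p])) :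
    ∑ s ∈ Ico 1 p, (s : ZMod p) ^ (p - 3) * ∑ i ∈ range s, (i : ZMod p) ^ (p - 2)
      = PadicInt.toZMod B := by
  classical
  set bz : ℕ → ℤ_[p] := fun j =>
    if h : j + 1 < p then ⟨((bernoulli j : ℚ) : ℚ_[p]), bernoulli_norm p j h⟩ else 0 with hbzdef
  have hbzc : ∀ j, j + 1 < p → ((bz j : ℤ_[p]) : ℚ_[p]) = ((bernoulli j : ℚ) : ℚ_[p]) := by
    intro j hj
    rw [hbzdef]
    dsimp only
    exact congrArg Subtype.val (dif_pos hj)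
  have hzeq : ((p : ℤ_[p]) - 1) * ∑ s ∈ Ico 1 p, (s : ℤ_[p]) ^ (p - 3)
        * ∑ i ∈ range s, (i : ℤ_[p]) ^ (p - 2)
      = ∑ j ∈ range (p - 1), bz j * ((p - 1).choose j : ℤ_[p])
          * ∑ s ∈ Ico 1 p, (s : ℤ_[p]) ^ (2 * p - 4 - j) := by
    have hq := congrArg (fun q : ℚ => (q : ℚ_[p])) (hQ p hp5)
    simp only [Rat.cast_mul, Rat.cast_sum, Rat.cast_pow, Rat.cast_natCast, Rat.cast_sub,
      Rat.cast_one] at hq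
    have hL : ((((p : ℤ_[p]) - 1) * ∑ s ∈ Ico 1 p, (s : ℤ_[p]) ^ (p - 3)
          * ∑ i ∈ range s, (i : ℤ_[p]) ^ (p - 2) : ℤ_[p]) : ℚ_[p])
        = ((p : ℚ_[p]) - 1) * ∑ s ∈ Ico 1 p, (s : ℚ_[p]) ^ (p - 3)
          * ∑ i ∈ range s, (i : ℚ_[p]) ^ (p - 2) := by
      simp only [PadicInt.coe_mul, PadicInt.coe_sub, PadicInt.coe_one, PadicInt.coe_natCast,
        PadicInt.coe_pow, coe_sum p]
    have hR : (((∑ j ∈ range (p - 1), bz j * ((p - 1).choose j : ℤ_[p])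
          * ∑ s ∈ Ico 1 p, (s : ℤ_[p]) ^ (2 * p - 4 - j) : ℤ_[p])) : ℚ_[p])
        = ∑ j ∈ range (p - 1), ((bernoulli j : ℚ) : ℚ_[p]) * (((p - 1).choose j : ℕ) : ℚ_[p])
          * ∑ s ∈ Ico 1 p, (s : ℚ_[p]) ^ (2 * p - 4 - j) := by
      simp only [PadicInt.coe_mul, PadicInt.coe_natCast, PadicInt.coe_pow, coe_sum p]
      refine Finset.sum_congr rfl fun j hj => ?_
      rw [Finset.mem_range] at hj
      rw [hbzc j (by omega)]
    exact Subtype.coe_injective (hL.trans (hq.trans hR.symm))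
  have h2 := congrArg (PadicInt.toZMod : ℤ_[p] →+* ZMod p) hzeq
  simp only [map_mul, map_sub, map_one, map_sum, map_pow, map_natCast] at h2
  rw [ZMod.natCast_self, zero_sub, neg_one_mul] at h2
  have h3 : ∑ j ∈ range (p - 1), PadicInt.toZMod (bz j) * (((p - 1).choose j : ℕ) : ZMod p)
        * ∑ s ∈ Ico 1 p, (s : ZMod p) ^ (2 * p - 4 - j)
      = - PadicInt.toZMod (bz (p - 3)) := by
    rw [Finset.sum_eq_single (p - 3)]
    · have he : 2 * p - 4 - (p - 3) = p - 1 := by omega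
      rw [he, sum_Ico_pow p (p - 1) (by omega), if_pos dvd_rfl]
      have hch : (((p - 1).choose (p - 3) : ℕ) : ZMod p) = 1 := by
        have hsymm : (p - 1).choose (p - 3) = (p - 1).choose 2 := by
          rw [← Nat.choose_symm (by omega : 2 ≤ p - 1)]
          congr 1 <;> omega
        have hdvd2 : 2 ∣ (p - 1) * ((p - 1) - 1) := by
          have hev := Nat.even_mul_succ_self (p - 2)
          have hre : (p - 1) * ((p - 1) - 1) = (p - 2) * ((p - 2) + 1) := by
            rw [show (p - 1) - 1 = p - 2 by omega, show (p - 2) + 1 = p - 1 by omega]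
            ring
          rw [hre]
          exact hev.two_dvd
        have h4 : 2 * ((p - 1).choose 2) = (p - 1) * ((p - 1) - 1) := by
          rw [Nat.choose_two_right]
          exact Nat.mul_div_cancel' hdvd2
        have h5 := congrArg (Nat.cast : ℕ → ZMod p) h4
        rw [Nat.cast_mul, Nat.cast_mul, Nat.cast_ofNat,
          Nat.cast_sub (by omega : 1 ≤ p), ZMod.natCast_self,
          show (p - 1) - 1 = p - 2 by omega,
          Nat.cast_sub (by omega : 2 ≤ p), ZMod.natCast_self] at h5
        have h6 : (2 : ZMod p) * (((p - 1).choose 2 : ℕ) : ZMod p) = 2 * 1 := by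
          rw [h5]
          ring
        have h2ne : (2 : ZMod p) ≠ 0 := by
          have := cast_ne_zero p (a := 2) (by norm_num) (by omega)
          simpa using this
        rw [hsymm]
        exact mul_left_cancel₀ h2ne h6
      rw [hch]
      ring
    · intro j hj hne
      rw [Finset.mem_range] at hj
      have he : 0 < 2 * p - 4 - j := by omega
      rw [sum_Ico_pow p _ he, if_neg ?_, mul_zero]
      intro hd
      obtain ⟨k, hk⟩ := hd
      rcases k with _ | _ | k
      · omega
      · omega
      · have hge : (p - 1) * (k + 1 + 1) ≥ (p - 1) * 2 := Nat.mul_le_mul_left _ (by omega)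
        omega
    · intro h
      exact absurd (Finset.mem_range.2 (by omega : p - 3 < p - 1)) h
  rw [h3] at h2
  have hb3 : bz (p - 3) = B :=
    Subtype.coe_injective ((hbzc (p - 3) (by omega)).trans hB.symm)
  rw [hb3] at h2
  exact neg_injective h2


noncomputable def winv (n : ℕ) (h : ¬ p ∣ n) : ℤ_[p] :=
  ⟨(((n : ℚ)⁻¹ : ℚ) : ℚ_[p]), by
    rw [Rat.cast_inv, Rat.cast_natCast, norm_inv, norm_nat_eq_one p h]
    norm_num⟩

noncomputable def wt (n : ℕ) : ℤ_[p] := if h : p ∣ n then 0 else winv p n h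

lemma wt_coe (n : ℕ) (h : ¬ p ∣ n) :
    ((wt p n : ℤ_[p]) : ℚ_[p]) = (((n : ℚ)⁻¹ : ℚ) : ℚ_[p]) := by
  rw [wt, dif_neg h]
  rfl

lemma toZMod_wt (n : ℕ) (h : ¬ p ∣ n) : PadicInt.toZMod (wt p n) = ((n : ZMod p))⁻¹ := by
  have hne : (n : ℚ_[p]) ≠ 0 := Nat.cast_ne_zero.2 (fun h0 => h (h0 ▸ dvd_zero p))
  have hmul : (n : ℤ_[p]) * wt p n = 1 :=
    Subtype.coe_injective (by
      show (((n : ℤ_[p]) * wt p n : ℤ_[p]) : ℚ_[p]) = ((1 : ℤ_[p]) : ℚ_[p])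
      rw [PadicInt.coe_mul, PadicInt.coe_natCast, wt_coe p n h, PadicInt.coe_one,
        Rat.cast_inv, Rat.cast_natCast, mul_inv_cancel₀ hne])
  have h2 := congrArg (PadicInt.toZMod : ℤ_[p] →+* ZMod p) hmul
  rw [map_mul, map_natCast, map_one] at h2
  exact (inv_eq_of_mul_eq_one_right h2).symm


end Stmt11Aux

section
open Stmt11Aux

theorem stmt_11 (p : ℕ) [hp : Fact p.Prime] (hp5 : 5 ≤ p) :
    ‖((((∑ l ∈ (Fintype.piFinset fun _ : Fin 3 => Finset.Ioo 0 (2 * p)).filter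
            (fun l : Fin 3 → ℕ => l 0 + l 1 + l 2 = 2 * p ∧ ∀ i, ¬ p ∣ l i),
          (1 : ℚ) / (l 0 * l 1 * l 2)) + 4 * bernoulli (p - 3)) : ℚ) : ℚ_[p])‖
      ≤ (p : ℝ) ^ (-1 : ℤ) := by
  have h0 : (Fintype.piFinset fun _ : Fin 3 => Finset.Ioo 0 (2 * p)).filter
      (fun l : Fin 3 → ℕ => l 0 + l 1 + l 2 = 2 * p ∧ ∀ i, ¬ p ∣ l i) = Fs p := rfl
  rw [h0]
  set Bz : ℤ_[p] := ⟨((bernoulli (p - 3) : ℚ) : ℚ_[p]), bernoulli_norm p (p - 3) (by omega)⟩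
    with hBz
  set x : ℤ_[p] := (∑ l ∈ Fs p, wt p (l 0 * l 1 * l 2)) + 4 * Bz with hx
  have hdvd : ∀ l ∈ Fs p, ¬ p ∣ (l 0 * l 1 * l 2) := by
    intro l hl hd
    rw [mem_Fs p] at hl
    obtain ⟨⟨a1, a2⟩, ⟨a3, a4⟩, ⟨a5, a6⟩, a7, hd1, hd2, hd3⟩ := hl
    rcases (Nat.Prime.dvd_mul hp.out).1 hd with hd' | hd'
    · rcases (Nat.Prime.dvd_mul hp.out).1 hd' with h | h
      · exact hd1 h
      · exact hd2 h
    · exact hd3 hd'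
  have hxcoe : (x : ℚ_[p]) = ((((∑ l ∈ Fs p, (1 : ℚ) / (l 0 * l 1 * l 2))
      + 4 * bernoulli (p - 3)) : ℚ) : ℚ_[p]) := by
    rw [hx, PadicInt.coe_add, PadicInt.coe_mul, Rat.cast_add, Rat.cast_mul, coe_sum p,
      Rat.cast_sum]
    congr 1
    · refine Finset.sum_congr rfl fun l hl => ?_
      rw [wt_coe p _ (hdvd l hl)]
      congr 1
      push_cast
      rw [one_div]
  have hker : PadicInt.toZMod x = 0 := by
    rw [hx, map_add, map_mul, map_sum]
    have hsum : ∑ l ∈ Fs p, PadicInt.toZMod (wt p (l 0 * l 1 * l 2)) = ∑ l ∈ Fs p, g p l := by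
      refine Finset.sum_congr rfl fun l hl => ?_
      rw [toZMod_wt p _ (hdvd l hl)]
      simp only [g, Nat.cast_mul]
    rw [hsum, combined p hp5, key2 p hp5 Bz rfl, map_ofNat]
    ring
  rw [← hxcoe, PadicInt.padic_norm_e_of_padicInt]
  have hx1 : ‖x‖ ≤ (p : ℝ) ^ (-(1 : ℕ) : ℤ) := by
    rw [PadicInt.norm_le_pow_iff_mem_span_pow]
    rw [pow_one, ← PadicInt.maximalIdeal_eq_span_p, ← PadicInt.ker_toZMod]
    exact RingHom.mem_ker.2 hker
  simpa using hx1

end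
end

section
/- Let p be a prime and n an odd positive integer with 3 ≤ n ≤ p - 3. Then Σ over (l_1,...,l_n) positive integers with l_1 + ··· + l_n = p of 1/(l_1···l_n) ≡ n!·(-B_{p-n}/n) (mod p), i.e., S_n^{(1)}(p) ≡ -(n-1)!·B_{p-n} (mod p). -/
open Finset

namespace ZC14

/-- Sum over compositions of `m` into `n` positive parts of the reciprocal product. -/
noncomputable def S (n m : ℕ) : ℚ :=
  ∑ l ∈ (Fintype.piFinset fun _ : Fin n => Finset.Icc 1 m).filter
      (fun l : Fin n → ℕ => (∑ i, l i) = m), ∏ i, ((l i : ℚ))⁻¹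

/-- elementary symmetric function of the reciprocals 1, 1/2, ..., 1/N, degree k -/
noncomputable def E (k N : ℕ) : ℚ :=
  ∑ A ∈ (Finset.Icc 1 N).powersetCard k, ∏ a ∈ A, ((a : ℚ))⁻¹

/-- elementary symmetric function of 1, ..., N (as a natural number) -/
def eN (k N : ℕ) : ℕ := ∑ A ∈ (Finset.Icc 1 N).powersetCard k, ∏ a ∈ A, a

/-- power sum of 1, ..., N -/
def PN (r N : ℕ) : ℕ := ∑ a ∈ Finset.Icc 1 N, a ^ r

lemma filter_comp_subset {n s m : ℕ} (hsm : s ≤ m) :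
    (Fintype.piFinset fun _ : Fin n => Finset.Icc 1 m).filter
      (fun l : Fin n → ℕ => (∑ i, l i) = s) =
    (Fintype.piFinset fun _ : Fin n => Finset.Icc 1 s).filter
      (fun l : Fin n → ℕ => (∑ i, l i) = s) := by
  ext l
  simp only [mem_filter, Fintype.mem_piFinset, Finset.mem_Icc]
  constructor
  · rintro ⟨h1, h2⟩
    refine ⟨fun i => ⟨(h1 i).1, ?_⟩, h2⟩
    calc l i ≤ ∑ j, l j := Finset.single_le_sum (fun j _ => Nat.zero_le _) (Finset.mem_univ i)
    _ = s := h2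
  · rintro ⟨h1, h2⟩
    exact ⟨fun i => ⟨(h1 i).1, le_trans (h1 i).2 hsm⟩, h2⟩

lemma S_zero_eq {n : ℕ} (hn : 1 ≤ n) : S n 0 = 0 := by
  rw [S]
  apply Finset.sum_eq_zero
  intro l hl
  simp only [mem_filter, Fintype.mem_piFinset, Finset.mem_Icc] at hl
  have := hl.1 ⟨0, hn⟩
  omega

lemma S_one {m : ℕ} (hm : 1 ≤ m) : S 1 m = (m : ℚ)⁻¹ := by
  rw [S]
  have h : (Fintype.piFinset fun _ : Fin 1 => Finset.Icc 1 m).filter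
      (fun l : Fin 1 → ℕ => (∑ i, l i) = m) = {fun _ => m} := by
    ext l
    simp only [mem_filter, Fintype.mem_piFinset, Finset.mem_Icc, Finset.mem_singleton,
      Fin.sum_univ_one]
    constructor
    · rintro ⟨_, h2⟩
      funext i
      rw [Subsingleton.elim i 0]; exact h2
    · rintro rfl
      exact ⟨fun i => ⟨hm, le_refl m⟩, rfl⟩
  rw [h, Finset.sum_singleton, Fin.prod_univ_one]

/-- key recurrence via symmetry -/
lemma S_rec (n m : ℕ) :
    (m : ℚ) * S (n + 1) m = (n + 1) * ∑ j ∈ Finset.range m, S n j := by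
  classical
  set F := (Fintype.piFinset fun _ : Fin (n+1) => Finset.Icc 1 m).filter
      (fun l : Fin (n+1) → ℕ => (∑ i, l i) = m) with hF
  have memF : ∀ l : Fin (n+1) → ℕ, l ∈ F ↔ (∀ i, l i ∈ Finset.Icc 1 m) ∧ (∑ i, l i) = m := by
    intro l
    simp [hF, Finset.mem_filter, Fintype.mem_piFinset]
  -- Step A
  have stepA : (m : ℚ) * S (n+1) m
      = ∑ i : Fin (n+1), ∑ l ∈ F, (l i : ℚ) * ∏ j, ((l j : ℚ))⁻¹ := by
    rw [S, Finset.mul_sum, Finset.sum_comm]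
    apply Finset.sum_congr rfl
    intro l hl
    have hsum : (∑ i, (l i : ℚ)) = (m : ℚ) := by
      have h2 := ((memF l).mp hl).2
      rw [← Nat.cast_sum]
      exact_mod_cast h2
    rw [← Finset.sum_mul, hsum]
  -- Step B : each inner sum equals the one for `Fin.last n`
  have stepB : ∀ i : Fin (n+1),
      (∑ l ∈ F, (l i : ℚ) * ∏ j, ((l j : ℚ))⁻¹)
        = ∑ l ∈ F, (l (Fin.last n) : ℚ) * ∏ j, ((l j : ℚ))⁻¹ := by
    intro i
    set σ := Equiv.swap i (Fin.last n) with hσ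
    refine Finset.sum_nbij' (fun l => l ∘ σ) (fun l => l ∘ σ) ?_ ?_ ?_ ?_ ?_
    · intro l hl
      rw [memF] at hl ⊢
      exact ⟨fun j => hl.1 (σ j), by rw [← hl.2]; exact Equiv.sum_comp σ l⟩
    · intro l hl
      rw [memF] at hl ⊢
      exact ⟨fun j => hl.1 (σ j), by rw [← hl.2]; exact Equiv.sum_comp σ l⟩
    · intro l _
      funext j
      simp only [Function.comp_apply, hσ, Equiv.swap_apply_self]
    · intro l _
      funext j
      simp only [Function.comp_apply, hσ, Equiv.swap_apply_self]
    · intro l _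
      have h1 : ((l ∘ σ) (Fin.last n) : ℚ) = (l i : ℚ) := by
        simp [Function.comp, hσ, Equiv.swap_apply_right]
      have h2 : (∏ j, (((l ∘ σ) j : ℚ))⁻¹) = ∏ j, ((l j : ℚ))⁻¹ :=
        Equiv.prod_comp σ (fun j => ((l j : ℚ))⁻¹)
      rw [h1, h2]
  -- Step C : cancel the last factor
  have stepC : (∑ l ∈ F, (l (Fin.last n) : ℚ) * ∏ j, ((l j : ℚ))⁻¹)
      = ∑ l ∈ F, ∏ j : Fin n, ((l j.castSucc : ℚ))⁻¹ := by
    apply Finset.sum_congr rfl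
    intro l hl
    have hlast : (l (Fin.last n) : ℚ) ≠ 0 := by
      have := ((memF l).mp hl).1 (Fin.last n)
      rw [Finset.mem_Icc] at this
      have h1 : 0 < l (Fin.last n) := this.1
      exact_mod_cast h1.ne'
    rw [Fin.prod_univ_castSucc, mul_comm (∏ j : Fin n, ((l j.castSucc : ℚ))⁻¹) _,
      ← mul_assoc, mul_inv_cancel₀ hlast, one_mul]
  -- Step D : drop the last coordinate
  have stepD : (∑ l ∈ F, ∏ j : Fin n, ((l j.castSucc : ℚ))⁻¹)
      = ∑ s ∈ Finset.range m, S n s := by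
    have hSs : ∀ s ∈ Finset.range m, S n s
        = ∑ g ∈ (Fintype.piFinset fun _ : Fin n => Finset.Icc 1 m).filter
            (fun g : Fin n → ℕ => (∑ i, g i) = s), ∏ j, ((g j : ℚ))⁻¹ := by
      intro s hs
      rw [Finset.mem_range] at hs
      rw [S, filter_comp_subset (le_of_lt hs)]
    rw [Finset.sum_congr rfl hSs, Finset.sum_sigma']
    refine Finset.sum_nbij'
      (fun l => ⟨∑ j : Fin n, l j.castSucc, fun j => l j.castSucc⟩)
      (fun x => Fin.snoc x.2 (m - x.1)) ?_ ?_ ?_ ?_ ?_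
    · intro l hl
      rw [memF] at hl
      have hsum := hl.2
      rw [Fin.sum_univ_castSucc] at hsum
      have hlast := hl.1 (Fin.last n)
      rw [Finset.mem_Icc] at hlast
      simp only [Finset.mem_sigma, Finset.mem_range, Finset.mem_filter, Fintype.mem_piFinset]
      exact ⟨by omega, fun j => hl.1 j.castSucc, trivial⟩
    · rintro ⟨s, g⟩ hx
      simp only [Finset.mem_sigma, Finset.mem_range, Finset.mem_filter,
        Fintype.mem_piFinset] at hx
      obtain ⟨hs, hg, hgs⟩ := hx
      rw [memF]
      constructor
      · intro j
        refine Fin.lastCases ?_ (fun j' => ?_) j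
        · simp only [Fin.snoc_last, Finset.mem_Icc]
          omega
        · simp only [Fin.snoc_castSucc]
          exact hg j'
      · rw [Fin.sum_univ_castSucc]
        simp only [Fin.snoc_castSucc, Fin.snoc_last]
        omega
    · intro l hl
      rw [memF] at hl
      have hsum := hl.2
      rw [Fin.sum_univ_castSucc] at hsum
      have hlast := hl.1 (Fin.last n)
      rw [Finset.mem_Icc] at hlast
      funext j
      refine Fin.lastCases ?_ (fun j' => ?_) j
      · simp only [Fin.snoc_last]
        omega
      · simp only [Fin.snoc_castSucc]
    · rintro ⟨s, g⟩ hx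
      simp only [Finset.mem_sigma, Finset.mem_range, Finset.mem_filter,
        Fintype.mem_piFinset] at hx
      obtain ⟨hs, hg, hgs⟩ := hx
      have h2 : (fun j : Fin n => (Fin.snoc g (m - s) : Fin (n+1) → ℕ) j.castSucc) = g := by
        funext j'
        simp only [Fin.snoc_castSucc]
      refine Sigma.ext ?_ ?_ <;> simp only [h2]
      · exact hgs
      · exact HEq.rfl
    · intro l _
      rfl
  rw [stepA, Finset.sum_congr rfl (fun i _ => stepB i), Finset.sum_const, Finset.card_univ,
    Fintype.card_fin, stepC, stepD, nsmul_eq_mul]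
  push_cast
  ring

lemma E_zero (N : ℕ) : E 0 N = 1 := by
  simp [E]

lemma E_succ_N (k N : ℕ) :
    E (k + 1) (N + 1) = E (k + 1) N + ((N + 1 : ℕ) : ℚ)⁻¹ * E k N := by
  have hnot : (N + 1) ∉ Finset.Icc 1 N := by simp
  have hins : Finset.Icc 1 (N + 1) = insert (N + 1) (Finset.Icc 1 N) := by
    ext x; simp [Finset.mem_Icc]; omega
  rw [E, hins, Finset.powersetCard_succ_insert hnot, Finset.sum_union, E, E, Finset.mul_sum]
  · congr 1
    rw [Finset.sum_image]
    · apply Finset.sum_congr rfl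
      intro A hA
      rw [Finset.mem_powersetCard] at hA
      have hnA : (N + 1) ∉ A := fun h => hnot (hA.1 h)
      rw [Finset.prod_insert hnA]
    · intro A hA B hB h
      rw [Finset.mem_coe, Finset.mem_powersetCard] at hA hB
      have hnA : (N + 1) ∉ A := fun h' => hnot (hA.1 h')
      have hnB : (N + 1) ∉ B := fun h' => hnot (hB.1 h')
      rw [← Finset.erase_insert hnA, ← Finset.erase_insert hnB, h]
  · rw [Finset.disjoint_right]
    intro A hA hA'
    simp only [Finset.mem_image] at hA
    obtain ⟨B, hB, rfl⟩ := hA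
    rw [Finset.mem_powersetCard] at hA'
    exact hnot (hA'.1 (Finset.mem_insert_self _ _))

lemma E_rec (k N : ℕ) :
    E (k + 1) N = ∑ j ∈ Finset.Icc 1 N, ((j : ℚ))⁻¹ * E k (j - 1) := by
  induction N with
  | zero =>
    rw [E, Finset.powersetCard_eq_empty.mpr (by simp)]
    simp
  | succ N ih =>
    have hins : Finset.Icc 1 (N + 1) = insert (N + 1) (Finset.Icc 1 N) := by
      ext x; simp [Finset.mem_Icc]; omega
    rw [E_succ_N, ih, hins, Finset.sum_insert (by simp)]
    simp only [Nat.add_sub_cancel]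
    push_cast
    ring

lemma S_formula : ∀ n m : ℕ, 1 ≤ n → 1 ≤ m →
    (m : ℚ) * S n m = (n.factorial : ℚ) * E (n - 1) (m - 1) := by
  intro n
  induction n with
  | zero => omega
  | succ n ih =>
    intro m _ hm
    rcases Nat.eq_zero_or_pos n with rfl | hn
    · rw [S_one hm]
      rw [mul_inv_cancel₀ (by exact_mod_cast Nat.pos_of_ne_zero (by omega) |>.ne')]
      simp [E_zero]
    · have hmm : 0 < m := hm
      rw [S_rec]
      have hsum : ∑ j ∈ Finset.range m, S n j = ∑ j ∈ Finset.Icc 1 (m-1), S n j := by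
        have : Finset.range m = insert 0 (Finset.Icc 1 (m-1)) := by
          ext x; simp [Finset.mem_Icc, Finset.mem_range]; omega
        rw [this, Finset.sum_insert (by simp), S_zero_eq hn, zero_add]
      rw [hsum]
      have hstep : ∑ j ∈ Finset.Icc 1 (m-1), S n j
          = (n.factorial : ℚ) * ∑ j ∈ Finset.Icc 1 (m-1), ((j:ℚ))⁻¹ * E (n-1) (j-1) := by
        rw [Finset.mul_sum]
        apply Finset.sum_congr rfl
        intro j hj
        rw [Finset.mem_Icc] at hj
        have h0 : 0 < j := hj.1
        have h1 : (j : ℚ) ≠ 0 := by exact_mod_cast h0.ne'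
        have h2 := ih j hn hj.1
        field_simp
        linarith [h2]
      rw [hstep, ← E_rec (n-1) (m-1)]
      have hn1 : n - 1 + 1 = n := by omega
      rw [hn1]
      have : (n + 1 : ℕ).factorial = (n+1) * n.factorial := rfl
      rw [this]
      push_cast
      ring

lemma E_dual (k N : ℕ) (hk : k ≤ N) :
    E k N * ((N.factorial : ℕ) : ℚ) = ((eN (N - k) N : ℕ) : ℚ) := by
  have hfac : ((N.factorial : ℕ) : ℚ) = ∏ a ∈ Finset.Icc 1 N, (a : ℚ) := by
    rw [← Nat.cast_prod]
    congr 1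
    rw [← Finset.prod_Ico_id_eq_factorial N]
    congr 1
  have hcard : (Finset.Icc 1 N).card = N := by simp
  rw [E, eN, Nat.cast_sum, hfac, Finset.sum_mul]
  refine Finset.sum_nbij' (fun A => Finset.Icc 1 N \ A) (fun B => Finset.Icc 1 N \ B)
    ?_ ?_ ?_ ?_ ?_
  · intro A hA
    rw [Finset.mem_powersetCard] at hA ⊢
    refine ⟨Finset.sdiff_subset, ?_⟩
    rw [Finset.card_sdiff_of_subset hA.1, hcard, hA.2]
  · intro B hB
    rw [Finset.mem_powersetCard] at hB ⊢
    refine ⟨Finset.sdiff_subset, ?_⟩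
    rw [Finset.card_sdiff_of_subset hB.1, hcard, hB.2]
    omega
  · intro A hA
    rw [Finset.mem_powersetCard] at hA
    exact Finset.sdiff_sdiff_eq_self hA.1
  · intro B hB
    rw [Finset.mem_powersetCard] at hB
    exact Finset.sdiff_sdiff_eq_self hB.1
  · intro A hA
    rw [Finset.mem_powersetCard] at hA
    have hz : (∏ a ∈ A, (a:ℚ)) ≠ 0 := by
      apply Finset.prod_ne_zero_iff.mpr
      intro a ha
      have := hA.1 ha
      rw [Finset.mem_Icc] at this
      have h1 : 0 < a := this.1
      exact_mod_cast h1.ne'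
    rw [← Finset.prod_sdiff hA.1, Nat.cast_prod]
    rw [show (∏ a ∈ A, ((a:ℚ))⁻¹) = (∏ a ∈ A, (a:ℚ))⁻¹ by rw [Finset.prod_inv_distrib]]
    field_simp

lemma emb_inj (N : ℕ) : Function.Injective (fun i : Fin N => (i : ℕ) + 1) :=
  fun a b h => Fin.val_injective (Nat.add_right_cancel h)

def emb (N : ℕ) : Fin N ↪ ℕ := ⟨fun i => (i : ℕ) + 1, emb_inj N⟩

lemma emb_univ (N : ℕ) : (Finset.univ : Finset (Fin N)).map (emb N) = Finset.Icc 1 N := by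
  ext x
  simp only [Finset.mem_map, Finset.mem_univ, true_and, Finset.mem_Icc, emb,
    Function.Embedding.coeFn_mk]
  constructor
  · rintro ⟨i, rfl⟩; omega
  · rintro ⟨h1, h2⟩
    exact ⟨⟨x - 1, by omega⟩, by simp; omega⟩

lemma eN_eq (n N : ℕ) :
    (eN n N : ℚ) = ∑ t ∈ (Finset.univ : Finset (Fin N)).powersetCard n,
      ∏ i ∈ t, ((i : ℚ) + 1) := by
  rw [eN, Nat.cast_sum, ← emb_univ N, Finset.powersetCard_map, Finset.sum_map]
  apply Finset.sum_congr rfl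
  intro t _
  have hme : (Finset.mapEmbedding (emb N)).toEmbedding t = t.map (emb N) := rfl
  rw [hme, Finset.prod_map, Nat.cast_prod]
  apply Finset.prod_congr rfl
  intro i _
  simp [emb]

lemma PN_eq (n N : ℕ) :
    (PN n N : ℚ) = ∑ i : Fin N, ((i : ℚ) + 1) ^ n := by
  rw [PN, Nat.cast_sum, ← emb_univ N, Finset.sum_map]
  apply Finset.sum_congr rfl
  intro i _
  push_cast [emb]
  norm_num

/-- Newton's identity specialized -/
lemma newton (k N : ℕ) :
    (k : ℚ) * (eN k N : ℚ) = (-1) ^ (k + 1) *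
      ∑ a ∈ Finset.HasAntidiagonal.antidiagonal k with a.1 < k,
        (-1) ^ a.1 * (eN a.1 N : ℚ) * (PN a.2 N : ℚ) := by
  classical
  have h := congrArg (MvPolynomial.aeval (fun i : Fin N => (i : ℚ) + 1))
    (MvPolynomial.mul_esymm_eq_sum (Fin N) ℚ k)
  simp only [map_mul, map_sum, map_pow, map_neg, map_one, map_natCast] at h
  have he : ∀ m : ℕ, MvPolynomial.aeval (fun i : Fin N => (i : ℚ) + 1)
      (MvPolynomial.esymm (Fin N) ℚ m) = (eN m N : ℚ) := by
    intro m
    rw [MvPolynomial.aeval_esymm_eq_multiset_esymm, Finset.esymm_map_val, eN_eq]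
  have hp : ∀ m : ℕ, MvPolynomial.aeval (fun i : Fin N => (i : ℚ) + 1)
      (MvPolynomial.psum (Fin N) ℚ m) = (PN m N : ℚ) := by
    intro m
    rw [MvPolynomial.psum, map_sum, PN_eq]
    apply Finset.sum_congr rfl
    intro i _
    rw [map_pow, MvPolynomial.aeval_X]
  rw [he] at h
  rw [h]
  congr 1
  apply Finset.sum_congr rfl
  intro a _
  rw [he, hp]

section Padic

variable (p : ℕ) [hp : Fact p.Prime]

lemma not_dvd_of_lt {k : ℕ} (h1 : 0 < k) (h2 : k < p) : ¬ p ∣ k :=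
  fun h => absurd (Nat.le_of_dvd h1 h) (by omega)

lemma norm_nat_le_one (k : ℕ) : ‖(k : ℚ_[p])‖ ≤ 1 := by
  have := Padic.norm_int_le_one (p := p) (k : ℤ)
  simpa using this

lemma norm_nat_eq_one {k : ℕ} (h : ¬ p ∣ k) : ‖(k : ℚ_[p])‖ = 1 := by
  refine le_antisymm (norm_nat_le_one p k) ?_
  by_contra hlt
  push_neg at hlt
  have h2 : ‖((k : ℤ) : ℚ_[p])‖ < 1 := by push_cast; exact hlt
  rw [Padic.norm_intCast_lt_one_iff] at h2
  exact h (by exact_mod_cast h2)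

lemma norm_nat_dvd {k : ℕ} (h : p ∣ k) : ‖(k : ℚ_[p])‖ ≤ (p : ℝ) ^ (-1 : ℤ) := by
  have h1 : ((p : ℤ)) ^ 1 ∣ (k : ℤ) := by
    simpa using Int.natCast_dvd_natCast.mpr h
  have h2 := (Padic.norm_int_le_pow_iff_dvd (p := p) (k : ℤ) 1).mpr h1
  simpa using h2

lemma zmod_sum_pow {r : ℕ} (hr1 : 1 ≤ r) (hr2 : r < p - 1) :
    ((PN r (p - 1) : ℕ) : ZMod p) = 0 := by
  have hp1 : 1 ≤ p := hp.out.pos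
  rw [PN, Nat.cast_sum]
  have hins : Finset.range p = insert 0 (Finset.Icc 1 (p - 1)) := by
    ext x; simp [Finset.mem_Icc, Finset.mem_range]; omega
  have h0 : (∑ a ∈ Finset.Icc 1 (p-1), ((a ^ r : ℕ) : ZMod p))
      = ∑ a ∈ Finset.range p, ((a : ZMod p)) ^ r := by
    rw [hins, Finset.sum_insert (by simp)]
    push_cast
    rw [zero_pow (by omega), zero_add]
  rw [h0]
  have h1 : (∑ a ∈ Finset.range p, ((a : ZMod p)) ^ r) = ∑ x : ZMod p, x ^ r := by
    refine Finset.sum_nbij' (fun a => (a : ZMod p)) (fun x => x.val) ?_ ?_ ?_ ?_ ?_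
    · intro a _; exact Finset.mem_univ _
    · intro x _; rw [Finset.mem_range]; exact ZMod.val_lt x
    · intro a ha; rw [Finset.mem_range] at ha; exact ZMod.val_natCast_of_lt ha
    · intro x _; exact ZMod.natCast_rightInverse x
    · intro a _; rfl
  rw [h1]
  have hcard : r < Fintype.card (ZMod p) - 1 := by rw [ZMod.card]; omega
  exact FiniteField.sum_pow_lt_card_sub_one (K := ZMod p) r hcard

lemma PN_norm {r : ℕ} (hr1 : 1 ≤ r) (hr2 : r < p - 1) :
    ‖((PN r (p - 1) : ℕ) : ℚ_[p])‖ ≤ (p : ℝ) ^ (-1 : ℤ) := by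
  apply norm_nat_dvd
  exact (ZMod.natCast_eq_zero_iff _ _).mp (zmod_sum_pow p hr1 hr2)

lemma PN_faulhaber {r : ℕ} (hr : 1 ≤ r) :
    ((PN r (p - 1) : ℕ) : ℚ) =
      ∑ i ∈ Finset.range (r + 1),
        bernoulli i * ((r + 1).choose i) * (p : ℚ) ^ (r + 1 - i) / (r + 1) := by
  have hp1 : 1 ≤ p := hp.out.pos
  rw [← sum_range_pow p r]
  rw [PN, Nat.cast_sum]
  have hins : Finset.range p = insert 0 (Finset.Icc 1 (p - 1)) := by
    ext x; simp [Finset.mem_Icc, Finset.mem_range]; omega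
  rw [hins, Finset.sum_insert (by simp)]
  rw [show ((0:ℕ):ℚ) ^ r = 0 from by rw [Nat.cast_zero, zero_pow (by omega)], zero_add]
  push_cast
  rfl

lemma norm_sub_le_max (a b : ℚ_[p]) : ‖a - b‖ ≤ max ‖a‖ ‖b‖ := by
  rw [sub_eq_add_neg]
  refine (Padic.nonarchimedean a (-b)).trans ?_
  rw [norm_neg]

lemma norm_term_le {t i : ℕ} (ht : t ≤ i) (hi1 : i + 1 < p)
    (hB : ‖((bernoulli t : ℚ) : ℚ_[p])‖ ≤ 1) :
    ‖((bernoulli t : ℚ) : ℚ_[p]) * (((i+1).choose t : ℕ) : ℚ_[p]) * (p : ℚ_[p]) ^ (i+1-t)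
        / ((i+1 : ℕ) : ℚ_[p])‖ ≤ (p : ℝ) ^ (-((i + 1 - t : ℕ) : ℤ)) := by
  rw [norm_div, norm_mul, norm_mul, norm_pow, Padic.norm_p,
    norm_nat_eq_one p (not_dvd_of_lt p (by omega) hi1)]
  have h1 : ‖(((i+1).choose t : ℕ) : ℚ_[p])‖ ≤ 1 := norm_nat_le_one p _
  have hppos : (0:ℝ) < p := by exact_mod_cast hp.out.pos
  have h2 : ((p:ℝ)⁻¹) ^ (i+1-t) = (p:ℝ) ^ (-((i + 1 - t : ℕ) : ℤ)) := by
    rw [← zpow_natCast ((p:ℝ)⁻¹) (i+1-t), inv_zpow, ← zpow_neg]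
  rw [div_one]
  calc ‖((bernoulli t : ℚ) : ℚ_[p])‖ * ‖(((i+1).choose t : ℕ) : ℚ_[p])‖ * ((p:ℝ)⁻¹) ^ (i+1-t)
      ≤ 1 * 1 * ((p:ℝ)⁻¹) ^ (i+1-t) := by
        apply mul_le_mul_of_nonneg_right (mul_le_mul hB h1 (norm_nonneg _) (by norm_num))
        positivity
    _ = (p : ℝ) ^ (-((i + 1 - t : ℕ) : ℤ)) := by rw [one_mul, one_mul, h2]

lemma zpow_anti {a b : ℤ} (hab : a ≤ b) : (p : ℝ) ^ a ≤ (p : ℝ) ^ b := by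
  apply zpow_le_zpow_right₀ _ hab
  exact_mod_cast hp.out.one_lt.le

lemma bern_norm : ∀ i : ℕ, i ≤ p - 3 → ‖((bernoulli i : ℚ) : ℚ_[p])‖ ≤ 1 := by
  intro i
  induction i using Nat.strong_induction_on with
  | _ i ih =>
    intro hi
    rcases Nat.lt_or_ge i 2 with h2 | h2
    · interval_cases i
      · rw [bernoulli_zero]
        norm_num
      · have hp4 : 4 ≤ p := by omega
        rw [bernoulli_one]
        rw [show ((-1/2 : ℚ) : ℚ_[p]) = -((2:ℕ) : ℚ_[p])⁻¹ by push_cast; ring]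
        rw [norm_neg, norm_inv, norm_nat_eq_one p (not_dvd_of_lt p (by norm_num) (by omega))]
        norm_num
    · rcases Nat.even_or_odd i with he | ho
      swap
      · rw [bernoulli_eq_bernoulli'_of_ne_one (by omega), bernoulli'_eq_zero_of_odd ho (by omega)]
        simp
      · have hp5 : 5 ≤ p := by omega
        have hfa := PN_faulhaber p (r := i) (by omega)
        rw [Finset.sum_range_succ] at hfa
        have hlast : bernoulli i * ((i + 1).choose i) * (p:ℚ) ^ (i + 1 - i) / (i+1)
            = bernoulli i * p := by
          rw [Nat.choose_succ_self_right, show i + 1 - i = 1 from by omega, pow_one]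
          have : ((i:ℚ) + 1) ≠ 0 := by positivity
          push_cast
          field_simp
        rw [hlast] at hfa
        have hq : (bernoulli i : ℚ) * p = ((PN i (p-1) : ℕ) : ℚ)
            - ∑ t ∈ Finset.range i,
                bernoulli t * ((i+1).choose t) * (p:ℚ)^(i+1-t)/(i+1) := by
          linarith [hfa]
        have hc := congrArg (fun q : ℚ => (q : ℚ_[p])) hq
        push_cast at hc
        have hnorm1 : ‖((PN i (p-1) : ℕ) : ℚ_[p])‖ ≤ (p:ℝ)^(-1:ℤ) :=
          PN_norm p (by omega) (by omega)
        have hnorm2 : ‖(∑ t ∈ Finset.range i, ((bernoulli t : ℚ) : ℚ_[p])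
            * (((i+1).choose t : ℕ) : ℚ_[p]) * (p : ℚ_[p]) ^ (i+1-t)
            / ((i+1 : ℕ) : ℚ_[p]))‖ ≤ (p:ℝ)^(-1:ℤ) := by
          apply IsUltrametricDist.norm_sum_le_of_forall_le_of_nonneg (by positivity)
          intro t ht
          rw [Finset.mem_range] at ht
          refine (norm_term_le p (by omega) (by omega) (ih t ht (by omega))).trans ?_
          apply zpow_anti
          omega
        have hmain : ‖((bernoulli i : ℚ) : ℚ_[p]) * (p : ℚ_[p])‖ ≤ (p:ℝ)^(-1:ℤ) := by
          rw [show ((bernoulli i : ℚ) : ℚ_[p]) * (p : ℚ_[p])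
              = ((PN i (p-1) : ℕ) : ℚ_[p]) - (∑ t ∈ Finset.range i, ((bernoulli t : ℚ) : ℚ_[p])
              * (((i+1).choose t : ℕ) : ℚ_[p]) * (p : ℚ_[p]) ^ (i+1-t)
              / ((i+1 : ℕ) : ℚ_[p])) from ?_]
          · exact (norm_sub_le_max p _ _).trans (max_le hnorm1 hnorm2)
          · convert hc using 2 <;> push_cast <;> ring
        rw [norm_mul, Padic.norm_p] at hmain
        have hppos : (0:ℝ) < p := by exact_mod_cast hp.out.pos
        rw [zpow_neg_one] at hmain
        calc ‖((bernoulli i : ℚ) : ℚ_[p])‖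
            = ‖((bernoulli i : ℚ) : ℚ_[p])‖ * (p:ℝ)⁻¹ * p := by
              field_simp
          _ ≤ (p:ℝ)⁻¹ * p := by
              apply mul_le_mul_of_nonneg_right hmain hppos.le
          _ = 1 := by field_simp

lemma bern_key {j : ℕ} (hje : Even j) (hj4 : 4 ≤ j) (hjp : j ≤ p - 3) :
    ‖((bernoulli j : ℚ) : ℚ_[p]) * (p : ℚ_[p]) - ((PN j (p-1) : ℕ) : ℚ_[p])‖
      ≤ (p : ℝ) ^ (-2 : ℤ) := by
  have hp7 : 7 ≤ p := by omega
  have hfa := PN_faulhaber p (r := j) (by omega)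
  rw [Finset.sum_range_succ] at hfa
  have hlast : bernoulli j * ((j + 1).choose j) * (p:ℚ) ^ (j + 1 - j) / (j+1)
      = bernoulli j * p := by
    rw [Nat.choose_succ_self_right, show j + 1 - j = 1 from by omega, pow_one]
    have : ((j:ℚ) + 1) ≠ 0 := by positivity
    push_cast
    field_simp
  rw [hlast] at hfa
  have hq : (bernoulli j : ℚ) * p - ((PN j (p-1) : ℕ) : ℚ)
      = - ∑ t ∈ Finset.range j, bernoulli t * ((j+1).choose t) * (p:ℚ)^(j+1-t)/(j+1) := by
    linarith [hfa]
  have hc := congrArg (fun q : ℚ => (q : ℚ_[p])) hq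
  push_cast at hc
  rw [show ((bernoulli j : ℚ) : ℚ_[p]) * (p : ℚ_[p]) - ((PN j (p-1) : ℕ) : ℚ_[p])
      = - ∑ t ∈ Finset.range j, ((bernoulli t : ℚ) : ℚ_[p])
          * (((j+1).choose t : ℕ) : ℚ_[p]) * (p : ℚ_[p]) ^ (j+1-t)
          / ((j+1 : ℕ) : ℚ_[p]) from by convert hc using 2 <;> push_cast <;> rfl]
  rw [norm_neg]
  apply IsUltrametricDist.norm_sum_le_of_forall_le_of_nonneg (by positivity)
  intro t ht
  rw [Finset.mem_range] at ht
  rcases eq_or_ne t (j - 1) with rfl | hne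
  · have hodd : Odd (j - 1) := by
      rcases hje with ⟨r, hr⟩
      exact ⟨r - 1, by omega⟩
    rw [bernoulli_eq_bernoulli'_of_ne_one (by omega), bernoulli'_eq_zero_of_odd hodd (by omega)]
    simp only [Rat.cast_zero, zero_mul, zero_div, norm_zero]
    positivity
  · refine (norm_term_le p (by omega) (by omega) (bern_norm p t (by omega))).trans ?_
    apply zpow_anti
    omega

lemma eN_zero_val (N : ℕ) : eN 0 N = 1 := by simp [eN]

lemma eN_small {i : ℕ} (h1 : 1 ≤ i) (h2 : i ≤ p - 2) :
    ‖((eN i (p-1) : ℕ) : ℚ_[p])‖ ≤ (p:ℝ)^(-1:ℤ) := by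
  have hp3 : 3 ≤ p := by omega
  have hnewt := congrArg (fun q : ℚ => (q : ℚ_[p])) (newton i (p-1))
  push_cast at hnewt
  have hrhs : ‖((-1 : ℚ_[p]) ^ (i + 1) *
      ∑ a ∈ Finset.HasAntidiagonal.antidiagonal i with a.1 < i,
        (-1 : ℚ_[p]) ^ a.1 * ((eN a.1 (p-1) : ℕ) : ℚ_[p]) * ((PN a.2 (p-1) : ℕ) : ℚ_[p]))‖
      ≤ (p:ℝ)^(-1:ℤ) := by
    rw [norm_mul, norm_pow, norm_neg, norm_one, one_pow, one_mul]
    apply IsUltrametricDist.norm_sum_le_of_forall_le_of_nonneg (by positivity)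
    intro a ha
    simp only [Finset.mem_filter, Finset.HasAntidiagonal.mem_antidiagonal] at ha
    rw [norm_mul, norm_mul, norm_pow, norm_neg, norm_one, one_pow, one_mul]
    calc ‖((eN a.1 (p-1) : ℕ) : ℚ_[p])‖ * ‖((PN a.2 (p-1) : ℕ) : ℚ_[p])‖
        ≤ 1 * ((p:ℝ)^(-1:ℤ)) := by
          apply mul_le_mul (norm_nat_le_one p _)
            (PN_norm p (by omega) (by omega)) (norm_nonneg _) (by norm_num)
      _ = (p:ℝ)^(-1:ℤ) := one_mul _
  have hni : ‖((i : ℕ) : ℚ_[p])‖ = 1 := norm_nat_eq_one p (not_dvd_of_lt p (by omega) (by omega))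
  calc ‖((eN i (p-1) : ℕ) : ℚ_[p])‖
      = ‖((i : ℕ) : ℚ_[p]) * ((eN i (p-1) : ℕ) : ℚ_[p])‖ := by rw [norm_mul, hni, one_mul]
    _ ≤ (p:ℝ)^(-1:ℤ) := by rw [hnewt]; exact hrhs

lemma eN_key {j : ℕ} (hje : Even j) (hj4 : 4 ≤ j) (hjp : j ≤ p - 3) :
    ‖(j : ℚ_[p]) * ((eN j (p-1) : ℕ) : ℚ_[p]) + ((PN j (p-1) : ℕ) : ℚ_[p])‖
      ≤ (p:ℝ)^(-2:ℤ) := by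
  have hp7 : 7 ≤ p := by omega
  have hnewt := congrArg (fun q : ℚ => (q : ℚ_[p])) (newton j (p-1))
  push_cast at hnewt
  have hsgn : ((-1 : ℚ_[p])) ^ (j + 1) = -1 := Odd.neg_one_pow (Even.add_one hje)
  rw [hsgn, neg_one_mul] at hnewt
  have h0mem : ((0, j) : ℕ × ℕ) ∈ (Finset.HasAntidiagonal.antidiagonal j).filter (fun a => a.1 < j) := by
    simp only [Finset.mem_filter, Finset.HasAntidiagonal.mem_antidiagonal]
    omega
  rw [← Finset.add_sum_erase _ _ h0mem] at hnewt
  rw [show ((-1 : ℚ_[p])) ^ (0 : ℕ) * ((eN 0 (p-1) : ℕ) : ℚ_[p]) * ((PN j (p-1) : ℕ) : ℚ_[p])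
      = ((PN j (p-1) : ℕ) : ℚ_[p]) from by rw [eN_zero_val]; push_cast; ring] at hnewt
  have heq : (j : ℚ_[p]) * ((eN j (p-1) : ℕ) : ℚ_[p]) + ((PN j (p-1) : ℕ) : ℚ_[p])
      = - ∑ a ∈ ((Finset.HasAntidiagonal.antidiagonal j).filter (fun a => a.1 < j)).erase (0, j),
          (-1 : ℚ_[p]) ^ a.1 * ((eN a.1 (p-1) : ℕ) : ℚ_[p]) * ((PN a.2 (p-1) : ℕ) : ℚ_[p]) := by
    rw [hnewt]; ring
  rw [heq, norm_neg]
  apply IsUltrametricDist.norm_sum_le_of_forall_le_of_nonneg (by positivity)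
  intro a ha
  have hamem := Finset.mem_of_mem_erase ha
  have hane := Finset.ne_of_mem_erase ha
  simp only [Finset.mem_filter, Finset.HasAntidiagonal.mem_antidiagonal] at hamem
  have ha1 : 1 ≤ a.1 := by
    by_contra h
    push_neg at h
    apply hane
    have h1 : a.1 = 0 := by omega
    have h2 : a.2 = j := by omega
    rw [← h1, ← h2]
  rw [norm_mul, norm_mul, norm_pow, norm_neg, norm_one, one_pow, one_mul]
  have hE : ‖((eN a.1 (p-1) : ℕ) : ℚ_[p])‖ ≤ (p:ℝ)^(-1:ℤ) := eN_small p ha1 (by omega)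
  have hP : ‖((PN a.2 (p-1) : ℕ) : ℚ_[p])‖ ≤ (p:ℝ)^(-1:ℤ) := PN_norm p (by omega) (by omega)
  calc ‖((eN a.1 (p-1) : ℕ) : ℚ_[p])‖ * ‖((PN a.2 (p-1) : ℕ) : ℚ_[p])‖
      ≤ ((p:ℝ)^(-1:ℤ)) * ((p:ℝ)^(-1:ℤ)) := by
        apply mul_le_mul hE hP (norm_nonneg _) (by positivity)
    _ = (p:ℝ)^(-2:ℤ) := by
        rw [← zpow_add₀ (by exact_mod_cast hp.out.ne_zero : (p:ℝ) ≠ 0)]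
        norm_num

lemma Ioo_filter_eq {n : ℕ} (hn : 2 ≤ n) :
    (Fintype.piFinset fun _ : Fin n => Finset.Ioo 0 p).filter
        (fun l : Fin n → ℕ => (∑ i, l i) = p)
      = (Fintype.piFinset fun _ : Fin n => Finset.Icc 1 p).filter
        (fun l : Fin n → ℕ => (∑ i, l i) = p) := by
  ext l
  simp only [Finset.mem_filter, Fintype.mem_piFinset, Finset.mem_Ioo, Finset.mem_Icc]
  constructor
  · rintro ⟨h1, h2⟩
    exact ⟨fun i => ⟨(h1 i).1, le_of_lt (h1 i).2⟩, h2⟩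
  · rintro ⟨h1, h2⟩
    refine ⟨fun i => ⟨(h1 i).1, ?_⟩, h2⟩
    have hsplit : l i + ∑ j ∈ Finset.univ.erase i, l j = p := by
      rw [Finset.add_sum_erase _ _ (Finset.mem_univ i)]; exact h2
    have hge : 1 ≤ ∑ j ∈ Finset.univ.erase i, l j := by
      have hcard : (Finset.univ.erase i).card = n - 1 := by
        rw [Finset.card_erase_of_mem (Finset.mem_univ i), Finset.card_univ, Fintype.card_fin]
      have hle : ∑ _j ∈ Finset.univ.erase i, 1 ≤ ∑ j ∈ Finset.univ.erase i, l j :=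
        Finset.sum_le_sum (fun j _ => (h1 j).1)
      rw [Finset.sum_const, smul_eq_mul, mul_one, hcard] at hle
      omega
    omega

end Padic

end ZC14

theorem stmt_14 (p n : ℕ) [hp : Fact p.Prime] (hn3 : 3 ≤ n) (hodd : Odd n)
    (hnp : n ≤ p - 3) :
    ‖((((∑ l ∈ (Fintype.piFinset fun _ : Fin n => Finset.Ioo 0 p).filter
            (fun l : Fin n → ℕ => (∑ i, l i) = p),
          (∏ i, (l i : ℚ))⁻¹)
        + ((n - 1).factorial : ℚ) * bernoulli (p - n)) : ℚ) : ℚ_[p])‖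
      ≤ (p : ℝ) ^ (-1 : ℤ) := by
  have pp := hp.out
  have hne6 : p ≠ 6 := fun h => by rw [h] at pp; norm_num at pp
  have hp7 : 7 ≤ p := by omega
  have hpodd : Odd p := pp.odd_of_ne_two (by omega)
  set j := p - n with hjdef
  have hje : Even j := Nat.Odd.sub_odd hpodd hodd
  have hj4 : 4 ≤ j := by
    rcases hje with ⟨r, hr⟩
    omega
  have hjp3 : j ≤ p - 3 := by omega
  rw [ZC14.Ioo_filter_eq p (by omega),
    show (∑ l ∈ (Fintype.piFinset fun _ : Fin n => Finset.Icc 1 p).filter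
        (fun l : Fin n → ℕ => (∑ i, l i) = p), (∏ i, (l i : ℚ))⁻¹) = ZC14.S n p from by
      rw [ZC14.S]
      exact Finset.sum_congr rfl (fun l _ => (Finset.prod_inv_distrib _).symm)]
  -- the rational identity
  have hq1 : (p:ℚ) * ZC14.S n p = (n.factorial : ℚ) * ZC14.E (n-1) (p-1) :=
    ZC14.S_formula n p (by omega) (by omega)
  have hq2 : ZC14.E (n-1) (p-1) * (((p-1).factorial : ℕ) : ℚ) = ((ZC14.eN j (p-1) : ℕ) : ℚ) := by
    have h := ZC14.E_dual (n-1) (p-1) (by omega)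
    rw [show (p-1) - (n-1) = j from by omega] at h
    exact h
  have hq3 : (p:ℚ) * (((p-1).factorial : ℕ) : ℚ) * ZC14.S n p
      = ((n.factorial : ℕ) : ℚ) * ((ZC14.eN j (p-1) : ℕ) : ℚ) := by
    linear_combination (((p-1).factorial : ℕ) : ℚ) * hq1 + ((n.factorial : ℕ) : ℚ) * hq2
  have hc3 := congrArg (fun q : ℚ => (q : ℚ_[p])) hq3
  push_cast at hc3
  push_cast
  -- abbreviations
  set T : ℚ_[p] := ((ZC14.S n p : ℚ) : ℚ_[p]) + ((n-1).factorial : ℚ_[p])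
      * ((bernoulli j : ℚ) : ℚ_[p]) with hT
  set B : ℚ_[p] := ((bernoulli j : ℚ) : ℚ_[p]) with hB
  set e : ℚ_[p] := ((ZC14.eN j (p-1) : ℕ) : ℚ_[p]) with he
  set P : ℚ_[p] := ((ZC14.PN j (p-1) : ℕ) : ℚ_[p]) with hP
  set F : ℚ_[p] := (((p-1).factorial : ℕ) : ℚ_[p]) with hF
  set c : ℚ_[p] := (((n-1).factorial : ℕ) : ℚ_[p]) with hc
  show ‖T‖ ≤ (p : ℝ) ^ (-1 : ℤ)
  have hppos : (0:ℝ) < p := by exact_mod_cast pp.pos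
  have hpR : ‖(p : ℚ_[p])‖ = (p:ℝ)^(-1:ℤ) := by
    rw [Padic.norm_p, zpow_neg_one]
  -- key estimates
  have hK : ‖(j : ℚ_[p]) * e + (p : ℚ_[p]) * B‖ ≤ (p:ℝ)^(-2:ℤ) := by
    have hsplit : (j : ℚ_[p]) * e + (p : ℚ_[p]) * B
        = ((j : ℚ_[p]) * e + P) + (B * (p : ℚ_[p]) - P) := by ring
    rw [hsplit]
    refine (Padic.nonarchimedean _ _).trans (max_le ?_ ?_)
    · exact ZC14.eN_key p hje hj4 hjp3
    · exact ZC14.bern_key p hje hj4 hjp3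
  have hW : ‖(j : ℚ_[p]) * F - (n : ℚ_[p])‖ ≤ (p:ℝ)^(-1:ℤ) := by
    set z : ℤ := (j : ℤ) * ((p-1).factorial : ℤ) - n with hz
    have hcast : ((z : ℤ) : ℚ_[p]) = (j : ℚ_[p]) * F - (n : ℚ_[p]) := by
      rw [hz]; push_cast; ring
    rw [← hcast]
    have hdvd : ((p : ℤ)) ∣ z := by
      have h0 : ((z : ℤ) : ZMod p) = 0 := by
        rw [hz]
        push_cast
        rw [ZMod.wilsons_lemma]
        rw [show ((j : ℕ) : ZMod p) = -(n : ZMod p) from by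
          rw [hjdef, Nat.cast_sub (by omega), ZMod.natCast_self, zero_sub]]
        ring
      exact (ZMod.intCast_zmod_eq_zero_iff_dvd z p).mp h0
    have := (Padic.norm_int_le_pow_iff_dvd (p := p) z 1).mpr (by simpa using hdvd)
    simpa using this
  have hfacn : c * (n : ℚ_[p]) = ((n.factorial : ℕ) : ℚ_[p]) := by
    rw [hc]
    have h := Nat.mul_factorial_pred (show n ≠ 0 by omega)
    exact_mod_cast congrArg (fun k : ℕ => (k : ℚ_[p])) (by rw [mul_comm] at h; exact h)
  have E1 : (j : ℚ_[p]) * (p : ℚ_[p]) * F * T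
      = ((n.factorial : ℕ) : ℚ_[p]) * ((j : ℚ_[p]) * e + (p : ℚ_[p]) * B)
        + (p : ℚ_[p]) * B * c * ((j : ℚ_[p]) * F - (n : ℚ_[p])) := by
    rw [hT]
    linear_combination (j : ℚ_[p]) * hc3 + ((p : ℚ_[p]) * B) * hfacn
  have hRHS : ‖((n.factorial : ℕ) : ℚ_[p]) * ((j : ℚ_[p]) * e + (p : ℚ_[p]) * B)
      + (p : ℚ_[p]) * B * c * ((j : ℚ_[p]) * F - (n : ℚ_[p]))‖ ≤ (p:ℝ)^(-2:ℤ) := by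
    refine (Padic.nonarchimedean _ _).trans (max_le ?_ ?_)
    · rw [norm_mul]
      calc ‖((n.factorial : ℕ) : ℚ_[p])‖ * ‖(j : ℚ_[p]) * e + (p : ℚ_[p]) * B‖
          ≤ 1 * ((p:ℝ)^(-2:ℤ)) := mul_le_mul (ZC14.norm_nat_le_one p _) hK (norm_nonneg _)
            (by norm_num)
        _ = (p:ℝ)^(-2:ℤ) := one_mul _
    · rw [norm_mul, norm_mul, norm_mul, hpR]
      have hBle : ‖B‖ ≤ 1 := ZC14.bern_norm p j hjp3
      have hcle : ‖c‖ ≤ 1 := ZC14.norm_nat_le_one p _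
      calc (p:ℝ)^(-1:ℤ) * ‖B‖ * ‖c‖ * ‖(j : ℚ_[p]) * F - (n : ℚ_[p])‖
          ≤ (p:ℝ)^(-1:ℤ) * 1 * 1 * ((p:ℝ)^(-1:ℤ)) := by
            apply mul_le_mul _ hW (norm_nonneg _) (by positivity)
            apply mul_le_mul _ hcle (norm_nonneg _) (by positivity)
            apply mul_le_mul_of_nonneg_left hBle (by positivity)
        _ = (p:ℝ)^(-2:ℤ) := by
            rw [mul_one, mul_one, ← zpow_add₀ (ne_of_gt hppos)]
            norm_num
  have hjn : ‖(j : ℚ_[p])‖ = 1 := ZC14.norm_nat_eq_one p (ZC14.not_dvd_of_lt p (by omega) (by omega))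
  have hFn : ‖F‖ = 1 := by
    apply ZC14.norm_nat_eq_one
    rw [Nat.Prime.dvd_factorial pp]
    omega
  have hfinal : (p:ℝ)^(-1:ℤ) * ‖T‖ ≤ (p:ℝ)^(-2:ℤ) := by
    calc (p:ℝ)^(-1:ℤ) * ‖T‖ = ‖(j : ℚ_[p]) * (p : ℚ_[p]) * F * T‖ := by
          rw [norm_mul, norm_mul, norm_mul, hjn, hpR, hFn, one_mul, mul_one]
      _ ≤ (p:ℝ)^(-2:ℤ) := by rw [E1]; exact hRHS
  calc ‖T‖ = (p:ℝ) * ((p:ℝ)^(-1:ℤ) * ‖T‖) := by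
        rw [zpow_neg_one, ← mul_assoc, mul_inv_cancel₀ (ne_of_gt hppos), one_mul]
    _ ≤ (p:ℝ) * ((p:ℝ)^(-2:ℤ)) := mul_le_mul_of_nonneg_left hfinal hppos.le
    _ = (p:ℝ)^(-1:ℤ) := by
        rw [show (-1:ℤ) = 1 + (-2) from by norm_num, zpow_add₀ (ne_of_gt hppos), zpow_one]
end

section
/- Let p be a prime, r a positive integer, and n, k, m positive integers with k < n < p - 1. Then S_n^{(k)}(p^r) ≡ (-1)^n · S_n^{(n-k)}(p^r) (mod p^r), where S_n^{(m)}(p^r) = Σ over (l_1,...,l_n) with l_1+···+l_n = m·p^r, each 0 < l_j < p^r, and p ∤ l_j, of 1/(l_1 ··· l_n). -/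
open Finset

section aux

variable {p n r : ℕ}

/-- index set -/
private def Aset (n m p r : ℕ) : Finset (Fin n → ℕ) :=
  (Fintype.piFinset fun _ : Fin n => Finset.Ioo 0 (p ^ r)).filter
      (fun l : Fin n → ℕ => (∑ i, l i) = m * p ^ r ∧ ∀ i, ¬ p ∣ l i)

private lemma mem_Aset {m : ℕ} {l : Fin n → ℕ} :
    l ∈ Aset n m p r ↔ (∀ i, 0 < l i ∧ l i < p ^ r) ∧ (∑ i, l i) = m * p ^ r ∧ ∀ i, ¬ p ∣ l i := by
  simp [Aset, Fintype.mem_piFinset, Finset.mem_Ioo, and_assoc]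

private lemma map_mem (hr : 0 < r) {m : ℕ} {l : Fin n → ℕ}
    (hl : l ∈ Aset n m p r) : (fun i => p ^ r - l i) ∈ Aset n (n - m) p r := by
  rw [mem_Aset] at hl ⊢
  obtain ⟨h1, h2, h3⟩ := hl
  refine ⟨fun i => ?_, ?_, fun i hdvd => ?_⟩
  · have := (h1 i).1; have := (h1 i).2; omega
  · have hsum : (∑ i, (p ^ r - l i)) + ∑ i, l i = n * p ^ r := by
      rw [← Finset.sum_add_distrib]
      have : ∀ i ∈ Finset.univ (α := Fin n), p ^ r - l i + l i = p ^ r := fun i _ => by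
        have := (h1 i).2; omega
      rw [Finset.sum_congr rfl this, Finset.sum_const, Finset.card_univ, Fintype.card_fin,
        smul_eq_mul]
    have hnm : (n - m) * p ^ r = n * p ^ r - m * p ^ r := Nat.sub_mul n m _
    omega
  · have hp : p ∣ p ^ r := dvd_pow_self p hr.ne'
    have : p ∣ l i := by
      have := (h1 i).2
      have : l i = p ^ r - (p ^ r - l i) := by omega
      rw [this]
      exact Nat.dvd_sub hp hdvd
    exact h3 i this

end aux

private lemma Ssum_eq_s15 (hr : 0 < r) {k : ℕ} (hk : 0 < k) (hkn : k < n) :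
    Ssum n (n - k) p r = ∑ l ∈ Aset n k p r, (∏ i, ((p ^ r - l i : ℕ) : ℚ))⁻¹ := by
  have hsub : ∀ {l : Fin n → ℕ}, l ∈ Aset n k p r → ∀ i, p ^ r - (p ^ r - l i) = l i := by
    intro l hl i
    have := (mem_Aset.mp hl).1 i
    omega
  have hsub' : ∀ {l : Fin n → ℕ}, l ∈ Aset n (n - k) p r → ∀ i, p ^ r - (p ^ r - l i) = l i := by
    intro l hl i
    have := (mem_Aset.mp hl).1 i
    omega
  show ∑ l ∈ Aset n (n - k) p r, (∏ i, (l i : ℚ))⁻¹ = _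
  refine Finset.sum_nbij' (i := fun l i => p ^ r - l i) (j := fun l i => p ^ r - l i)
    (fun l hl => ?_) (fun l hl => map_mem hr hl) (fun l hl => ?_) (fun l hl => ?_)
    (fun l hl => ?_)
  · have := map_mem hr hl
    rwa [Nat.sub_sub_self hkn.le] at this
  · funext i; exact hsub' hl i
  · funext i; exact hsub hl i
  · congr 1
    refine Finset.prod_congr rfl fun i _ => ?_
    rw [hsub' hl i]

private lemma term_bound [hp : Fact p.Prime] (hr : 0 < r) {k : ℕ} {l : Fin n → ℕ}
    (hl : l ∈ Aset n k p r) :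
    ‖((((∏ i, (l i : ℚ))⁻¹ - (-1 : ℚ) ^ n * (∏ i, ((p ^ r - l i : ℕ) : ℚ))⁻¹) : ℚ) : ℚ_[p])‖
      ≤ (p : ℝ) ^ (-(r : ℤ)) := by
  obtain ⟨h1, h2, h3⟩ := mem_Aset.mp hl
  have h3' : ∀ i, ¬ p ∣ (p ^ r - l i) := fun i hdvd => by
    have hle := (h1 i).2
    have hp' : p ∣ p ^ r := dvd_pow_self p hr.ne'
    have : l i = p ^ r - (p ^ r - l i) := by omega
    exact h3 i (this ▸ Nat.dvd_sub hp' hdvd)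
  set A : ℚ_[p] := (((∏ i, l i : ℕ) : ℤ) : ℚ_[p]) with hA
  set B : ℚ_[p] := (((∏ i, (p ^ r - l i) : ℕ) : ℤ) : ℚ_[p]) with hB
  have hAnorm : ‖A‖ = 1 := by
    refine le_antisymm (Padic.norm_int_le_one _) ?_
    by_contra h
    push_neg at h
    have := Padic.norm_intCast_lt_one_iff.mp h
    rw [Int.natCast_dvd_natCast, Prime.dvd_finset_prod_iff hp.out.prime _] at this
    obtain ⟨i, _, hi⟩ := this
    exact h3 i hi
  have hBnorm : ‖B‖ = 1 := by
    refine le_antisymm (Padic.norm_int_le_one _) ?_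
    by_contra h
    push_neg at h
    have := Padic.norm_intCast_lt_one_iff.mp h
    rw [Int.natCast_dvd_natCast, Prime.dvd_finset_prod_iff hp.out.prime _] at this
    obtain ⟨i, _, hi⟩ := this
    exact h3' i hi
  have hA0 : A ≠ 0 := by rw [← norm_pos_iff, hAnorm]; norm_num
  have hB0 : B ≠ 0 := by rw [← norm_pos_iff, hBnorm]; norm_num
  have hcast : ((((∏ i, (l i : ℚ))⁻¹ - (-1 : ℚ) ^ n * (∏ i, ((p ^ r - l i : ℕ) : ℚ))⁻¹) : ℚ) : ℚ_[p])
      = A⁻¹ - (-1 : ℚ_[p]) ^ n * B⁻¹ := by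
    rw [hA, hB]
    push_cast
    ring
  have hdvd : ((p : ℤ) ^ r) ∣ ((∏ i, (p ^ r - l i) : ℕ) : ℤ) - (-1) ^ n * ((∏ i, l i : ℕ) : ℤ) := by
    have := ZMod.intCast_zmod_eq_zero_iff_dvd
      (((∏ i, (p ^ r - l i) : ℕ) : ℤ) - (-1) ^ n * ((∏ i, l i : ℕ) : ℤ)) (p ^ r)
    rw [← Nat.cast_pow, ← this]
    push_cast
    have heq : ∀ i ∈ Finset.univ (α := Fin n),
        (((p ^ r - l i : ℕ) : ZMod (p ^ r))) = - (l i : ZMod (p ^ r)) := by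
      intro i _
      have hle := (h1 i).2
      have : ((p ^ r - l i : ℕ) : ZMod (p ^ r)) = ((p ^ r : ℕ) : ZMod (p ^ r)) - (l i : ZMod (p ^ r)) := by
        rw [← Nat.cast_sub hle.le]
      rw [this, ZMod.natCast_self]
      ring
    rw [Finset.prod_congr rfl heq]
    have : ∀ i ∈ Finset.univ (α := Fin n),
        (-(l i : ZMod (p ^ r))) = (-1) * (l i : ZMod (p ^ r)) := fun i _ => by ring
    rw [Finset.prod_congr rfl this, Finset.prod_mul_distrib, Finset.prod_const,
      Finset.card_univ, Fintype.card_fin]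
    ring
  have hkey : A⁻¹ - (-1 : ℚ_[p]) ^ n * B⁻¹ = (B - (-1 : ℚ_[p]) ^ n * A) / (A * B) := by
    field_simp
  rw [hcast, hkey, norm_div, norm_mul, hAnorm, hBnorm, mul_one, div_one]
  have hBA : B - (-1 : ℚ_[p]) ^ n * A
      = ((((∏ i, (p ^ r - l i) : ℕ) : ℤ) - (-1) ^ n * ((∏ i, l i : ℕ) : ℤ) : ℤ) : ℚ_[p]) := by
    rw [hA, hB]
    push_cast
    ring
  rw [hBA]
  exact (Padic.norm_int_le_pow_iff_dvd _ _).mpr hdvd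

theorem stmt_15 (p n k r : ℕ) [hp : Fact p.Prime] (hr : 0 < r) (hk : 0 < k)
    (hkn : k < n) (hnp : n < p - 1) :
    ‖(((Ssum n k p r - (-1 : ℚ) ^ n * Ssum n (n - k) p r) : ℚ) : ℚ_[p])‖
      ≤ (p : ℝ) ^ (-(r : ℤ)) := by
  have hq : Ssum n k p r - (-1 : ℚ) ^ n * Ssum n (n - k) p r
      = ∑ l ∈ Aset n k p r,
          ((∏ i, (l i : ℚ))⁻¹ - (-1 : ℚ) ^ n * (∏ i, ((p ^ r - l i : ℕ) : ℚ))⁻¹) := by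
    have h0 : Ssum n k p r = ∑ l ∈ Aset n k p r, (∏ i, (l i : ℚ))⁻¹ := rfl
    rw [h0, Ssum_eq_s15 hr hk hkn, Finset.mul_sum, ← Finset.sum_sub_distrib]
  rw [hq, Rat.cast_sum]
  exact IsUltrametricDist.norm_sum_le_of_forall_le_of_nonneg
    (by positivity) (fun l hl => term_bound hr hl)
end
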